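/- arXiv:2211.07318 — 6 statements merged into one kernel-verified Lean document; each statement's English description precedes it below -/
import Mathlib

section
/- For all real numbers a > 0 and b > 0, the integral ∫₀^∞ u·e^{-a u²}·(e^{b u} - e^{-b u}) du is at most (√π · b / a^{3/2}) · e^{b²/(4a)}. -/
open MeasureTheory Real Set Filter Topology

lemma shift_Ioi_aux (f : ℝ → ℝ) (c d : ℝ) :
    ∫ x in Ioi c, f (x + d) = ∫ x in Ioi (c + d), f x := by
  have h := (measurePreserving_add_right (volume : Measure ℝ) d).setIntegral_preimage_emb
      (MeasurableEquiv.addRight d).measurableEmbedding f (Ioi (c + d))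
  rwa [show (· + d) ⁻¹' Ioi (c + d) = Ioi c by ext x; simp] at h

lemma gauss_tail (a c : ℝ) (ha : 0 < a) :
    ∫ x in Ioi c, x * Real.exp (-a * x ^ 2) = Real.exp (-a * c ^ 2) / (2 * a) := by
  have A : ∀ x ∈ Ici c, HasDerivAt (fun x : ℝ => -Real.exp (-a * x ^ 2) / (2 * a))
      (x * Real.exp (-a * x ^ 2)) x := by
    intro x _
    have h1 : HasDerivAt (fun x : ℝ => -a * x ^ 2) (-a * (2 * x)) x := by
      simpa using (hasDerivAt_pow 2 x).const_mul (-a)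
    refine (h1.exp.neg.div_const (2 * a)).congr_deriv ?_
    rw [div_eq_iff (by positivity : (2 * a : ℝ) ≠ 0)]
    ring
  have B : Tendsto (fun x : ℝ => -Real.exp (-a * x ^ 2) / (2 * a)) atTop (𝓝 0) := by
    have : Tendsto (fun x : ℝ => Real.exp (-a * x ^ 2)) atTop (𝓝 0) :=
      Real.tendsto_exp_atBot.comp
        ((tendsto_pow_atTop two_ne_zero).const_mul_atTop_of_neg (neg_lt_zero.2 ha))
    simpa using (this.neg.div_const (2 * a))
  have h := integral_Ioi_of_hasDerivAt_of_tendsto' A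
    ((integrable_mul_exp_neg_mul_sq ha).integrableOn) B
  rw [h]
  ring

theorem integral_u_exp_diff_bound (a b : ℝ) (ha : 0 < a) (hb : 0 < b) :
    ∫ u in Ioi (0 : ℝ), u * Real.exp (-a * u ^ 2) * (Real.exp (b * u) - Real.exp (-b * u)) ≤
      Real.sqrt π * b / a ^ ((3 : ℝ) / 2) * Real.exp (b ^ 2 / (4 * a)) := by
  set m : ℝ := b / (2 * a) with hm_def
  have hm : 0 < m := by positivity
  -- pointwise rewriting of the integrand by completing the square
  have hkey : ∀ u : ℝ, u * Real.exp (-a * u ^ 2) * (Real.exp (b * u) - Real.exp (-b * u)) =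
      Real.exp (b ^ 2 / (4 * a)) *
        (u * Real.exp (-a * (u - m) ^ 2) - u * Real.exp (-a * (u + m) ^ 2)) := by
    intro u
    have e1 : Real.exp (b ^ 2 / (4 * a)) * Real.exp (-a * (u - m) ^ 2)
        = Real.exp (-a * u ^ 2) * Real.exp (b * u) := by
      rw [← Real.exp_add, ← Real.exp_add]
      congr 1
      rw [hm_def]
      field_simp [hm_def]
      ring
    have e2 : Real.exp (b ^ 2 / (4 * a)) * Real.exp (-a * (u + m) ^ 2)
        = Real.exp (-a * u ^ 2) * Real.exp (-b * u) := by
      rw [← Real.exp_add, ← Real.exp_add]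
      congr 1
      rw [hm_def]
      field_simp [hm_def]
      ring
    linear_combination (-u) * e1 + u * e2
  simp only [hkey]
  rw [integral_const_mul]
  -- integrability facts
  have gint : Integrable (fun v : ℝ => (v + m) * Real.exp (-a * v ^ 2)) := by
    have := (integrable_mul_exp_neg_mul_sq ha).add ((integrable_exp_neg_mul_sq ha).const_mul m)
    simpa [add_mul, mul_comm, Pi.add_def] using this
  have gint' : Integrable (fun v : ℝ => (v - m) * Real.exp (-a * v ^ 2)) := by
    have := (integrable_mul_exp_neg_mul_sq ha).sub ((integrable_exp_neg_mul_sq ha).const_mul m)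
    simpa [sub_mul, mul_comm, Pi.sub_def] using this
  have IX : IntegrableOn (fun u : ℝ => u * Real.exp (-a * (u - m) ^ 2)) (Ioi 0) := by
    have := (gint.comp_sub_right m)
    simpa [sub_add_cancel] using this.integrableOn
  have IY : IntegrableOn (fun u : ℝ => u * Real.exp (-a * (u + m) ^ 2)) (Ioi 0) := by
    have := (gint'.comp_add_right m)
    simpa [add_sub_cancel_right] using this.integrableOn
  rw [integral_sub IX IY]
  -- shift the integrals
  have hA : (∫ u in Ioi (0:ℝ), u * Real.exp (-a * (u - m) ^ 2))
      = ∫ v in Ioi (-m), (v + m) * Real.exp (-a * v ^ 2) := by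
    rw [show Ioi (-m) = Ioi ((0:ℝ) + -m) by norm_num,
      ← shift_Ioi_aux (fun v => (v + m) * Real.exp (-a * v ^ 2)) 0 (-m)]
    refine integral_congr_ae (.of_forall fun u => ?_)
    simp [sub_eq_add_neg]
  have hB : (∫ u in Ioi (0:ℝ), u * Real.exp (-a * (u + m) ^ 2))
      = ∫ v in Ioi m, (v - m) * Real.exp (-a * v ^ 2) := by
    rw [show Ioi m = Ioi ((0:ℝ) + m) by norm_num,
      ← shift_Ioi_aux (fun v => (v - m) * Real.exp (-a * v ^ 2)) 0 m]
    refine integral_congr_ae (.of_forall fun u => ?_)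
    simp
  rw [hA, hB]
  -- expand
  have hAsplit : (∫ v in Ioi (-m), (v + m) * Real.exp (-a * v ^ 2))
      = (∫ v in Ioi (-m), v * Real.exp (-a * v ^ 2))
        + m * ∫ v in Ioi (-m), Real.exp (-a * v ^ 2) := by
    rw [← integral_const_mul, ← integral_add ((integrable_mul_exp_neg_mul_sq ha).integrableOn)
      (((integrable_exp_neg_mul_sq ha).const_mul m).integrableOn)]
    refine integral_congr_ae (.of_forall fun v => ?_)
    ring
  have hBsplit : (∫ v in Ioi m, (v - m) * Real.exp (-a * v ^ 2))
      = (∫ v in Ioi m, v * Real.exp (-a * v ^ 2))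
        - m * ∫ v in Ioi m, Real.exp (-a * v ^ 2) := by
    rw [← integral_const_mul, ← integral_sub ((integrable_mul_exp_neg_mul_sq ha).integrableOn)
      (((integrable_exp_neg_mul_sq ha).const_mul m).integrableOn)]
    refine integral_congr_ae (.of_forall fun v => ?_)
    ring
  rw [hAsplit, hBsplit, gauss_tail a (-m) ha, gauss_tail a m ha]
  have hsym : (∫ v in Ioi m, Real.exp (-a * v ^ 2))
      = ∫ v in Iic (-m), Real.exp (-a * v ^ 2) := by
    rw [← integral_comp_neg_Ioi]
    refine integral_congr_ae (.of_forall fun v => ?_)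
    simp
  have hfull : (∫ v in Iic (-m), Real.exp (-a * v ^ 2))
      + (∫ v in Ioi (-m), Real.exp (-a * v ^ 2)) = Real.sqrt (π / a) := by
    rw [intervalIntegral.integral_Iic_add_Ioi ((integrable_exp_neg_mul_sq ha).integrableOn)
      ((integrable_exp_neg_mul_sq ha).integrableOn), integral_gaussian]
  -- now everything is explicit
  have hval : Real.exp (-a * (-m) ^ 2) / (2 * a)
        + m * (∫ v in Ioi (-m), Real.exp (-a * v ^ 2))
        - (Real.exp (-a * m ^ 2) / (2 * a)
          - m * ∫ v in Ioi m, Real.exp (-a * v ^ 2)) = m * Real.sqrt (π / a) := by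
    rw [hsym, neg_sq, ← hfull]
    ring
  rw [hval]
  -- final inequality
  have hsa : 0 < Real.sqrt a := Real.sqrt_pos.mpr ha
  have hrpow : a ^ ((3 : ℝ) / 2) = a * Real.sqrt a := by
    rw [show (3 : ℝ) / 2 = 1 + 1/2 by norm_num, Real.rpow_add ha, Real.rpow_one,
      ← Real.sqrt_eq_rpow]
  have hsqrt : Real.sqrt (π / a) = Real.sqrt π / Real.sqrt a := Real.sqrt_div' π ha.le ▸ by
    rw [Real.sqrt_div Real.pi_pos.le]
  rw [hrpow, hsqrt, mul_comm (Real.exp (b ^ 2 / (4 * a)))]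
  apply mul_le_mul_of_nonneg_right _ (Real.exp_pos _).le
  rw [hm_def]
  rw [div_mul_div_comm]
  have hπ : 0 < Real.sqrt π := Real.sqrt_pos.mpr Real.pi_pos
  rw [div_le_div_iff₀ (by positivity) (by positivity)]
  nlinarith [mul_pos (mul_pos hb hπ) (mul_pos ha hsa)]
end

section
/- There exists a constant C > 0 such that for every r > 0 and every t ≥ 1, ∫₀^∞ e^{-r·cosh(w)} · sinh(w) · |sin(π w / t)| dw ≤ C · t^{-1} · (1 + r^{-1} · |log r|). -/
open MeasureTheory Real Set

set_option maxHeartbeats 1000000 in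
theorem integral_sinh_sin_bound :
    ∃ C > (0 : ℝ), ∀ r > (0 : ℝ), ∀ t ≥ (1 : ℝ),
      ∫ w in Ioi (0 : ℝ),
          Real.exp (-r * Real.cosh w) * Real.sinh w * |Real.sin (π * w / t)| ≤
        C * t⁻¹ * (1 + r⁻¹ * |Real.log r|) := by
  refine ⟨100, by norm_num, fun r hr t ht => ?_⟩
  have ht0 : (0:ℝ) < t := lt_of_lt_of_le one_pos ht
  obtain ⟨s, hs⟩ : ∃ s : ℝ, s = r / 2 := ⟨_, rfl⟩
  have hs0 : 0 < s := by rw [hs]; positivity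
  obtain ⟨c, hc⟩ : ∃ c : ℝ, c = |Real.log s| := ⟨_, rfl⟩
  have hc0 : 0 ≤ c := hc ▸ abs_nonneg _
  obtain ⟨K, hK⟩ : ∃ K : ℝ, K = 2 / r + 2 * c / r := ⟨_, rfl⟩
  have hK0 : 0 ≤ K := by rw [hK]; positivity
  have hsK : s * K = 1 + c := by
    rw [hK, hs]; field_simp
  -- the dominating function and its antiderivative
  set G : ℝ → ℝ := fun w =>
    -(π / t * ((Real.exp w + K) * Real.exp (-(s * Real.exp w)))) with hGdef
  set h : ℝ → ℝ := fun w =>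
    π / t * ((s * Real.exp w + c) * (Real.exp w * Real.exp (-(s * Real.exp w)))) with hhdef
  have hderiv : ∀ x, HasDerivAt G (h x) x := by
    intro x
    have h1 : HasDerivAt (fun w : ℝ => Real.exp w) (Real.exp x) x := Real.hasDerivAt_exp x
    have h2 : HasDerivAt (fun w : ℝ => -(s * Real.exp w)) (-(s * Real.exp x)) x :=
      (h1.const_mul s).neg
    have h3 : HasDerivAt (fun w : ℝ => Real.exp (-(s * Real.exp w)))
        (Real.exp (-(s * Real.exp x)) * (-(s * Real.exp x))) x := h2.exp
    have h4 := (h1.add_const K).mul h3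
    have h5 := (h4.const_mul (π / t)).neg
    refine HasDerivAt.congr_deriv (f := G) h5 ?_
    symm
    simp only [hhdef]
    linear_combination (-(π / t * Real.exp x * Real.exp (-(s * Real.exp x)))) * hsK
  have hpos : ∀ x ∈ Ioi (0:ℝ), 0 ≤ h x := by
    intro x _
    simp only [hhdef]
    have := Real.exp_pos x
    have := Real.exp_pos (-(s * Real.exp x))
    positivity
  have htend : Filter.Tendsto G Filter.atTop (nhds 0) := by
    have l1 : Filter.Tendsto (fun u : ℝ => u ^ 1 * Real.exp (-u)) Filter.atTop (nhds 0) :=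
      Real.tendsto_pow_mul_exp_neg_atTop_nhds_zero 1
    have l2 : Filter.Tendsto (fun u : ℝ => Real.exp (-u)) Filter.atTop (nhds 0) :=
      Real.tendsto_exp_neg_atTop_nhds_zero
    have lu : Filter.Tendsto (fun w : ℝ => s * Real.exp w) Filter.atTop Filter.atTop :=
      (Real.tendsto_exp_atTop).const_mul_atTop hs0
    have lF : Filter.Tendsto (fun u : ℝ => (u / s + K) * Real.exp (-u)) Filter.atTop (nhds 0) := by
      have := ((l1.div_const s).add (l2.const_mul K))
      simp only [zero_div, smul_eq_mul, mul_zero, add_zero, zero_add, zero_mul] at this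
      convert this using 2 with u
      ring
    have := (lF.comp lu).neg.const_mul (π / t)
    simp only [mul_zero, neg_zero] at this
    convert this using 2 with w
    simp only [hGdef, Function.comp]
    rw [mul_div_cancel_left₀ _ hs0.ne']
    ring
  have hcont : ContinuousWithinAt G (Ici (0:ℝ)) 0 :=
    (hderiv 0).continuousAt.continuousWithinAt
  have hint : IntegrableOn h (Ioi (0:ℝ)) :=
    integrableOn_Ioi_deriv_of_nonneg hcont (fun x _ => hderiv x) hpos htend
  have hval : ∫ x in Ioi (0:ℝ), h x = 0 - G 0 :=
    integral_Ioi_of_hasDerivAt_of_nonneg hcont (fun x _ => hderiv x) hpos htend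
  -- pointwise bound of the integrand by h
  have hbound : ∀ w ∈ Ioi (0:ℝ),
      Real.exp (-r * Real.cosh w) * Real.sinh w * |Real.sin (π * w / t)| ≤ h w := by
    intro w hw
    have hw0 : 0 < w := hw
    have he : (0:ℝ) < Real.exp w := Real.exp_pos w
    have he' : (0:ℝ) < Real.exp (-w) := Real.exp_pos (-w)
    have A : |Real.sin (π * w / t)| ≤ π * w / t :=
      (Real.abs_sin_le_abs).trans_eq (abs_of_nonneg (by positivity))
    have B : Real.sinh w ≤ Real.exp w := by
      rw [Real.sinh_eq]; linarith
    have hBpos : 0 ≤ Real.sinh w := Real.sinh_nonneg_iff.2 hw0.le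
    have C2 : Real.exp (-r * Real.cosh w) ≤ Real.exp (-(s * Real.exp w)) := by
      apply Real.exp_le_exp.2
      rw [Real.cosh_eq, hs]
      nlinarith
    have D : w ≤ s * Real.exp w + c := by
      have hlog : Real.log (s * Real.exp w) ≤ s * Real.exp w :=
        (Real.log_le_sub_one_of_pos (by positivity)).trans (by linarith)
      rw [Real.log_mul hs0.ne' he.ne', Real.log_exp] at hlog
      have : -Real.log s ≤ c := hc ▸ neg_le_abs _
      linarith
    have hE : (0:ℝ) < Real.exp (-(s * Real.exp w)) := Real.exp_pos _
    calc Real.exp (-r * Real.cosh w) * Real.sinh w * |Real.sin (π * w / t)|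
        ≤ Real.exp (-(s * Real.exp w)) * Real.exp w * (π * w / t) := by
          gcongr <;> positivity
      _ ≤ Real.exp (-(s * Real.exp w)) * Real.exp w * (π * (s * Real.exp w + c) / t) := by
          have hpi := Real.pi_pos
          gcongr
      _ = h w := by simp only [hhdef]; ring
  have hfnonneg : ∀ w ∈ Ioi (0:ℝ),
      0 ≤ Real.exp (-r * Real.cosh w) * Real.sinh w * |Real.sin (π * w / t)| := by
    intro w hw
    have h1 : 0 ≤ Real.sinh w := Real.sinh_nonneg_iff.2 (le_of_lt hw)
    have h2 := Real.exp_pos (-r * Real.cosh w)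
    positivity
  have hmono : ∫ w in Ioi (0:ℝ),
      Real.exp (-r * Real.cosh w) * Real.sinh w * |Real.sin (π * w / t)| ≤
      ∫ w in Ioi (0:ℝ), h w := by
    refine integral_mono_of_nonneg ?_ hint ?_
    · filter_upwards [ae_restrict_mem measurableSet_Ioi] with w hw using hfnonneg w hw
    · filter_upwards [ae_restrict_mem measurableSet_Ioi] with w hw using hbound w hw
  refine hmono.trans ?_
  rw [hval]
  have hG0 : 0 - G 0 = π / t * ((1 + K) * Real.exp (-(s * 1))) := by
    simp only [hGdef, Real.exp_zero, zero_sub, neg_neg]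
  rw [hG0]
  -- now an arithmetic estimate
  obtain ⟨L, hLdef⟩ : ∃ L : ℝ, L = |Real.log r| := ⟨_, rfl⟩
  rw [← hLdef]
  have hL0 : 0 ≤ L := hLdef ▸ abs_nonneg _
  have hL : c ≤ L + 1 := by
    have hls : Real.log s = Real.log r - Real.log 2 := by
      rw [hs, Real.log_div hr.ne' two_ne_zero]
    have h2 : |Real.log 2| ≤ 1 := by
      rw [abs_of_nonneg (Real.log_nonneg one_le_two)]
      exact (Real.log_le_sub_one_of_pos two_pos).trans (by norm_num)
    calc c = |Real.log r - Real.log 2| := by rw [hc, hls]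
      _ ≤ |Real.log r| + |Real.log 2| := abs_sub _ _
      _ ≤ L + 1 := by rw [hLdef]; linarith
  have hexp : Real.exp (-(s * 1)) ≤ 1 := Real.exp_le_one_iff.2 (by nlinarith)
  obtain ⟨u, hu⟩ : ∃ u : ℝ, u = r⁻¹ := ⟨_, rfl⟩
  rw [← hu]
  have hu0 : 0 < u := hu ▸ inv_pos.2 hr
  have key : π * ((1 + K) * Real.exp (-(s * 1))) ≤ 100 * (1 + u * L) := by
    have hpi : π ≤ 4 := by linarith [Real.pi_le_four]
    have h1K : (0:ℝ) ≤ 1 + K := by linarith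
    have hEx := Real.exp_pos (-(s * 1))
    have hX0 : 0 ≤ (1 + K) * Real.exp (-(s * 1)) := by positivity
    have step1 : π * ((1 + K) * Real.exp (-(s * 1))) ≤ 4 * (1 + K) := by
      have hXle : (1 + K) * Real.exp (-(s * 1)) ≤ (1 + K) * 1 := by gcongr
      calc π * ((1 + K) * Real.exp (-(s * 1))) ≤ 4 * ((1 + K) * Real.exp (-(s * 1))) :=
            mul_le_mul_of_nonneg_right hpi hX0
        _ ≤ 4 * (1 + K) := by linarith
    refine step1.trans ?_
    have hKle : K ≤ 4 * u + 2 * (L * u) := by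
      have : K = 2 * u + 2 * (c * u) := by
        rw [hK, hu, div_eq_mul_inv, div_eq_mul_inv]; ring
      rw [this]
      nlinarith [mul_le_mul_of_nonneg_right hL hu0.le]
    have hLu : 0 ≤ L * u := mul_nonneg hL0 hu0.le
    rcases le_or_gt (1/2 : ℝ) r with hcase | hcase
    · have h1 : u ≤ 2 := by
        rw [hu]
        have h2 : (2:ℝ)⁻¹ ≤ r := by linarith
        have h3 := inv_anti₀ (by norm_num : (0:ℝ) < 2⁻¹) h2
        simpa using h3
      nlinarith
    · have hlog2 : (1/2 : ℝ) ≤ L := by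
        rw [hLdef]
        have hrlt : Real.log r < Real.log (1/2) := Real.log_lt_log hr hcase
        have hhalf : Real.log (1/2 : ℝ) = -Real.log 2 := by
          rw [one_div, Real.log_inv]
        have hl2 : (1/2:ℝ) ≤ Real.log 2 := by
          have := Real.log_two_gt_d9
          linarith
        rw [abs_of_nonpos (by linarith)]
        linarith
      have h4 : 16 * u ≤ 32 * (L * u) := by nlinarith
      nlinarith
  calc π / t * ((1 + K) * Real.exp (-(s * 1)))
      = t⁻¹ * (π * ((1 + K) * Real.exp (-(s * 1)))) := by ring
    _ ≤ t⁻¹ * (100 * (1 + u * L)) := by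
        have hti : 0 ≤ t⁻¹ := inv_nonneg.2 ht0.le
        exact mul_le_mul_of_nonneg_left key hti
    _ = 100 * t⁻¹ * (1 + u * L) := by ring
end

section
/- Define θ_r(t) = (r / √(2π³ t)) e^{π²/(2t)} ∫₀^∞ e^{-w²/(2t)} e^{-r cosh w} sinh(w) sin(π w / t) dw for r, t > 0, and a_t(y; x) = √(2π t) e^{x²/(2t)} y^{-1} e^{-(1+e^{2x})/(2y)} θ_{e^x / y}(t) for x ∈ ℝ, y > 0. Then for every fixed x ∈ ℝ and y > 0, t · a_t(y; x) → h(y,x) as t → ∞, where h(y,x) = y^{-2} e^{x - (1+e^{2x})/(2y)} ∫₀^∞ w e^{-(e^x/y) cosh w} sinh(w) dw. -/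
set_option maxHeartbeats 1000000
open MeasureTheory Real Set Filter Topology

noncomputable section

lemma bound_aux {r : ℝ} (hr : 0 < r) {w : ℝ} (hw : 0 ≤ w) :
    w * Real.exp (-r * Real.cosh w) * Real.sinh w ≤ (8 / r ^ 2) * Real.exp (-(r/2) * w) := by
  have h1 : w ≤ Real.cosh w :=
    (Real.self_le_sinh_iff.2 hw).trans (Real.sinh_lt_cosh w).le
  have h2 : Real.sinh w ≤ Real.cosh w := (Real.sinh_lt_cosh w).le
  have h3 : 0 ≤ Real.sinh w := Real.sinh_nonneg_iff.2 hw
  set u := Real.cosh w with hu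
  have hu1 : (1:ℝ) ≤ u := Real.one_le_cosh w
  have key : u ^ 2 ≤ (8 / r ^ 2) * Real.exp (r/2 * u) := by
    have := Real.pow_div_factorial_le_exp (x := r/2 * u) (by positivity) 2
    norm_num [Nat.factorial] at this
    have hr2 : (0:ℝ) < r^2 := by positivity
    rw [div_mul_eq_mul_div, le_div_iff₀ hr2]
    nlinarith [this]
  have e1 : Real.exp (-r * u) = (Real.exp (r/2*u))⁻¹ * Real.exp (-(r/2) * u) := by
    rw [← Real.exp_neg, ← Real.exp_add]; ring_nf
  have e2 : Real.exp (-(r/2) * u) ≤ Real.exp (-(r/2) * w) :=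
    Real.exp_le_exp.2 (by nlinarith)
  calc w * Real.exp (-r * u) * Real.sinh w
      ≤ u * Real.exp (-r * u) * u := by
        gcongr <;>
          first | exact (Real.exp_pos _).le | exact hw.trans h1 | exact h1 | exact h2 | positivity
    _ = u ^ 2 * ((Real.exp (r/2*u))⁻¹ * Real.exp (-(r/2) * u)) := by rw [e1]; ring
    _ ≤ ((8 / r ^ 2) * Real.exp (r/2 * u)) * ((Real.exp (r/2*u))⁻¹ * Real.exp (-(r/2) * u)) := by
        have := (Real.exp_pos (-(r/2)*u)).le
        have := (Real.exp_pos (r/2*u)).le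
        gcongr
    _ = (8 / r ^ 2) * Real.exp (-(r/2) * u) := by
        field_simp
    _ ≤ (8 / r ^ 2) * Real.exp (-(r/2) * w) := by
        have hr2 : (0:ℝ) < 8 / r^2 := by positivity
        exact mul_le_mul_of_nonneg_left e2 hr2.le

lemma integrable_bnd {r : ℝ} (hr : 0 < r) :
    IntegrableOn (fun w => w * Real.exp (-r * Real.cosh w) * Real.sinh w) (Ioi (0:ℝ)) := by
  have hg : IntegrableOn (fun w => (8 / r ^ 2) * Real.exp (-(r/2) * w)) (Ioi (0:ℝ)) :=
    (exp_neg_integrableOn_Ioi 0 (by positivity)).const_mul _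
  refine hg.mono' ?_ ?_
  · exact (Continuous.aestronglyMeasurable (by fun_prop)).restrict
  · filter_upwards [ae_restrict_mem measurableSet_Ioi] with w hw
    have hnn : 0 ≤ w * Real.exp (-r * Real.cosh w) * Real.sinh w :=
      mul_nonneg (mul_nonneg (le_of_lt hw) (Real.exp_pos _).le)
        (Real.sinh_nonneg_iff.2 (le_of_lt hw))
    rw [Real.norm_eq_abs, abs_of_nonneg hnn]
    exact bound_aux hr (le_of_lt hw)

/-- Yor's function `θ_r(t)`. -/
def yorTheta (r t : ℝ) : ℝ :=
  r / Real.sqrt (2 * π ^ 3 * t) * Real.exp (π ^ 2 / (2 * t)) *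
    ∫ w in Ioi (0 : ℝ),
      Real.exp (-w ^ 2 / (2 * t)) * Real.exp (-r * Real.cosh w) * Real.sinh w *
        Real.sin (π * w / t)

/-- Yor's density `a_t(y; x)` of `∫₀ᵗ e^{2 W_s} ds` given `W_t = x`. -/
def yorA (t y x : ℝ) : ℝ :=
  Real.sqrt (2 * π * t) * Real.exp (x ^ 2 / (2 * t)) * y⁻¹ *
    Real.exp (-(1 + Real.exp (2 * x)) / (2 * y)) * yorTheta (Real.exp x / y) t

/-- The limit function `h(y, x)`. -/
def hFun (y x : ℝ) : ℝ :=
  (y ^ 2)⁻¹ * Real.exp (x - (1 + Real.exp (2 * x)) / (2 * y)) *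
    ∫ w in Ioi (0 : ℝ),
      w * Real.exp (-(Real.exp x / y) * Real.cosh w) * Real.sinh w

lemma exp_div_tendsto_one (c : ℝ) :
    Tendsto (fun t : ℝ => Real.exp (c / (2 * t))) atTop (𝓝 1) := by
  have h : Tendsto (fun t : ℝ => c / (2 * t)) atTop (𝓝 0) := by
    have := tendsto_inv_atTop_zero.const_mul (c / 2)
    rw [mul_zero] at this
    refine this.congr fun t => by ring
  have := (Real.continuous_exp.tendsto 0).comp h
  simpa [Function.comp_def] using this

lemma sin_mul_tendsto {w : ℝ} (hw : 0 < w) :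
    Tendsto (fun t : ℝ => t / π * Real.sin (π * w / t)) atTop (𝓝 w) := by
  have hsin : Tendsto (fun s : ℝ => Real.sin s / s) (𝓝[≠] 0) (𝓝 1) := by
    have := hasDerivAt_iff_tendsto_slope.1 (Real.hasDerivAt_sin 0)
    simp only [Real.cos_zero] at this
    refine this.congr fun s => by simp [slope_def_field]
  have harg : Tendsto (fun t : ℝ => π * w / t) atTop (𝓝[≠] (0:ℝ)) := by
    rw [tendsto_nhdsWithin_iff]
    constructor
    · have := tendsto_inv_atTop_zero.const_mul (π * w)
      rw [mul_zero] at this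
      refine this.congr fun t => by ring
    · filter_upwards [eventually_gt_atTop (0:ℝ)] with t ht
      have h0 : 0 < π * w / t := by positivity
      simpa using ne_of_gt h0
  have hcomp : Tendsto (fun t : ℝ => Real.sin (π * w / t) / (π * w / t)) atTop (𝓝 1) :=
    hsin.comp harg
  have := hcomp.const_mul w
  rw [mul_one] at this
  refine this.congr' ?_
  filter_upwards [eventually_gt_atTop (0:ℝ)] with t ht
  have hπ := Real.pi_pos
  field_simp

/-- For fixed `x ∈ ℝ` and `y > 0`, `t ⬝ a_t(y; x) → h(y, x)` as `t → ∞`. -/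
theorem tendsto_mul_yorA (x : ℝ) (y : ℝ) (hy : 0 < y) :
    Tendsto (fun t : ℝ => t * yorA t y x) atTop (nhds (hFun y x)) := by
  set r := Real.exp x / y with hrdef
  have hr : 0 < r := by positivity
  set I := ∫ w in Ioi (0:ℝ), w * Real.exp (-r * Real.cosh w) * Real.sinh w with hI
  set c := y⁻¹ * r * Real.exp (-(1 + Real.exp (2 * x)) / (2 * y)) with hc
  -- dominated convergence
  have key : Tendsto (fun t : ℝ => ∫ w in Ioi (0:ℝ),
      t / π * (Real.exp (-w ^ 2 / (2 * t)) * Real.exp (-r * Real.cosh w) * Real.sinh w *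
        Real.sin (π * w / t))) atTop (𝓝 I) := by
    refine tendsto_integral_filter_of_dominated_convergence
      (fun w => (8 / r ^ 2) * Real.exp (-(r/2) * w)) ?_ ?_ ?_ ?_
    · filter_upwards with t
      exact (Continuous.aestronglyMeasurable (by fun_prop)).restrict
    · filter_upwards [eventually_gt_atTop (0:ℝ)] with t ht
      filter_upwards [ae_restrict_mem measurableSet_Ioi] with w hw
      have hw0 : (0:ℝ) < w := hw
      have hπ := Real.pi_pos
      have hsin : |Real.sin (π * w / t)| ≤ π * w / t :=
        le_trans Real.abs_sin_le_abs (le_of_eq (abs_of_nonneg (by positivity)))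
      have he1 : Real.exp (-w ^ 2 / (2 * t)) ≤ 1 := by
        rw [Real.exp_le_one_iff, neg_div, neg_nonpos]
        positivity
      have step : ‖t / π * (Real.exp (-w ^ 2 / (2 * t)) * Real.exp (-r * Real.cosh w) *
          Real.sinh w * Real.sin (π * w / t))‖
          ≤ w * Real.exp (-r * Real.cosh w) * Real.sinh w := by
        have hs3 : 0 ≤ Real.sinh w := Real.sinh_nonneg_iff.2 hw0.le
        rw [Real.norm_eq_abs, abs_mul, abs_mul, abs_mul, abs_mul,
          abs_of_nonneg (by positivity : (0:ℝ) ≤ t / π),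
          abs_of_nonneg (Real.exp_pos _).le, abs_of_nonneg (Real.exp_pos _).le,
          abs_of_nonneg hs3]
        calc t / π * (Real.exp (-w ^ 2 / (2 * t)) * Real.exp (-r * Real.cosh w) *
              Real.sinh w * |Real.sin (π * w / t)|)
            ≤ t / π * (1 * Real.exp (-r * Real.cosh w) * Real.sinh w * (π * w / t)) := by
              gcongr
          _ = w * Real.exp (-r * Real.cosh w) * Real.sinh w := by
              field_simp
      exact step.trans (bound_aux hr hw0.le)
    · exact (exp_neg_integrableOn_Ioi 0 (by positivity)).const_mul _
    · filter_upwards [ae_restrict_mem measurableSet_Ioi] with w hw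
      have hw0 : (0:ℝ) < w := hw
      have hA : Tendsto (fun t : ℝ => Real.exp (-w ^ 2 / (2 * t))) atTop (𝓝 1) := by
        have := exp_div_tendsto_one (-w ^ 2)
        refine this.congr fun t => by ring_nf
      have hS := sin_mul_tendsto hw0
      have := (hA.mul hS).mul
        (tendsto_const_nhds (x := Real.exp (-r * Real.cosh w) * Real.sinh w) (f := atTop))
      rw [one_mul, ← mul_assoc] at this
      exact this.congr fun t => by ring
  have hcval : c = (y ^ 2)⁻¹ * Real.exp (x - (1 + Real.exp (2 * x)) / (2 * y)) := by
    rw [hc, hrdef, Real.exp_sub, show -(1 + Real.exp (2 * x)) / (2 * y)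
      = -((1 + Real.exp (2 * x)) / (2 * y)) by ring, Real.exp_neg]
    have h1 := Real.exp_ne_zero ((1 + Real.exp (2 * x)) / (2 * y))
    field_simp
  -- rewrite `t * yorA t y x` eventually
  have heq : ∀ᶠ t : ℝ in atTop, t * yorA t y x =
      Real.exp (x ^ 2 / (2 * t)) * Real.exp (π ^ 2 / (2 * t)) * c *
        ∫ w in Ioi (0:ℝ), t / π * (Real.exp (-w ^ 2 / (2 * t)) *
          Real.exp (-r * Real.cosh w) * Real.sinh w * Real.sin (π * w / t)) := by
    filter_upwards [eventually_gt_atTop (0:ℝ)] with t ht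
    have hπ := Real.pi_pos
    have hsq : Real.sqrt (2 * π ^ 3 * t) = π * Real.sqrt (2 * π * t) := by
      rw [show 2 * π ^ 3 * t = π ^ 2 * (2 * π * t) by ring,
        Real.sqrt_mul (by positivity), Real.sqrt_sq hπ.le]
    have hs : 0 < Real.sqrt (2 * π * t) := Real.sqrt_pos.2 (by positivity)
    rw [MeasureTheory.integral_const_mul, yorA, yorTheta, hc, hsq]
    simp only [← hrdef]
    set J := ∫ w in Ioi (0:ℝ), Real.exp (-w ^ 2 / (2 * t)) *
      Real.exp (-r * Real.cosh w) * Real.sinh w * Real.sin (π * w / t) with hJ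
    field_simp
  have hE1 : Tendsto (fun t : ℝ => Real.exp (x ^ 2 / (2 * t))) atTop (𝓝 1) :=
    exp_div_tendsto_one _
  have hE3 : Tendsto (fun t : ℝ => Real.exp (π ^ 2 / (2 * t))) atTop (𝓝 1) :=
    exp_div_tendsto_one _
  have hfinal := ((hE1.mul hE3).mul (tendsto_const_nhds (x := c) (f := atTop))).mul key
  rw [one_mul, one_mul] at hfinal
  have hval : hFun y x = c * I := by
    rw [hFun, hcval, hI]
  rw [hval]
  exact Tendsto.congr' (heq.mono fun t h => h.symm) hfinal
end
end

section
/- For every r > 0, the function w ↦ w · e^{-r cosh w} · sinh(w) is integrable on (0,∞), and its integral is bounded above by C r^{-1}(1 + |log r|) for a universal constant C. -/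
open MeasureTheory Real Set

open Filter

lemma aux_d1 (c : ℝ) (hc : 0 < c) (w : ℝ) :
    HasDerivAt (fun w => -(1/c) * Real.exp (-(c * Real.exp w)))
      (Real.exp w * Real.exp (-(c * Real.exp w))) w := by
  have h := (((Real.hasDerivAt_exp w).const_mul c).neg.exp).const_mul (-(1/c))
  refine h.congr_deriv ?_
  field_simp
  rfl

lemma aux_d2 (c : ℝ) (hc : 0 < c) (w : ℝ) :
    HasDerivAt (fun w => -(1/c) * ((Real.exp w + 1/c) * Real.exp (-(c * Real.exp w))))
      (Real.exp w * Real.exp w * Real.exp (-(c * Real.exp w))) w := by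
  have h1 : HasDerivAt (fun w => Real.exp w + 1/c) (Real.exp w) w :=
    (Real.hasDerivAt_exp w).add_const _
  have h2 : HasDerivAt (fun w => Real.exp (-(c * Real.exp w)))
      (Real.exp (-(c * Real.exp w)) * -(c * Real.exp w)) w :=
    ((Real.hasDerivAt_exp w).const_mul c).neg.exp
  have h := (h1.mul h2).const_mul (-(1/c))
  refine h.congr_deriv ?_
  field_simp
  ring

lemma aux_t0 (c : ℝ) (hc : 0 < c) :
    Tendsto (fun w => Real.exp (-(c * Real.exp w))) atTop (nhds 0) := by
  apply Real.tendsto_exp_atBot.comp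
  exact tendsto_neg_atBot_iff.2 (Real.tendsto_exp_atTop.const_mul_atTop hc)

lemma aux_t1 (c : ℝ) (hc : 0 < c) :
    Tendsto (fun w => -(1/c) * Real.exp (-(c * Real.exp w))) atTop (nhds 0) := by
  have := (aux_t0 c hc).const_mul (-(1/c))
  simpa using this

lemma aux_t2 (c : ℝ) (hc : 0 < c) :
    Tendsto (fun w => -(1/c) * ((Real.exp w + 1/c) * Real.exp (-(c * Real.exp w)))) atTop (nhds 0) := by
  have hx : Tendsto (fun w : ℝ => c * Real.exp w) atTop atTop :=
    Real.tendsto_exp_atTop.const_mul_atTop hc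
  have h1 : Tendsto (fun y : ℝ => y * Real.exp (-y)) atTop (nhds 0) := by
    simpa using Real.tendsto_pow_mul_exp_neg_atTop_nhds_zero 1
  have h2 : Tendsto (fun w : ℝ => (c * Real.exp w) * Real.exp (-(c * Real.exp w))) atTop (nhds 0) :=
    h1.comp hx
  have h3 := ((h2.const_mul (1/c)).add ((aux_t0 c hc).const_mul (1/c))).const_mul (-(1/c))
  simp only [mul_zero, add_zero, zero_add] at h3
  apply h3.congr
  intro w
  field_simp

lemma aux_int1 (c : ℝ) (hc : 0 < c) :
    IntegrableOn (fun w => Real.exp w * Real.exp (-(c * Real.exp w))) (Ioi 0) ∧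
    ∫ w in Ioi (0:ℝ), Real.exp w * Real.exp (-(c * Real.exp w)) = (1/c) * Real.exp (-c) := by
  have hpos : ∀ x ∈ Ioi (0:ℝ), 0 ≤ Real.exp x * Real.exp (-(c * Real.exp x)) :=
    fun x _ => by positivity
  constructor
  · exact integrableOn_Ioi_deriv_of_nonneg' (fun x _ => aux_d1 c hc x) hpos (aux_t1 c hc)
  · rw [integral_Ioi_of_hasDerivAt_of_nonneg' (fun x _ => aux_d1 c hc x) hpos (aux_t1 c hc)]
    simp

lemma aux_int2 (c : ℝ) (hc : 0 < c) :
    IntegrableOn (fun w => Real.exp w * Real.exp w * Real.exp (-(c * Real.exp w))) (Ioi 0) ∧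
    ∫ w in Ioi (0:ℝ), Real.exp w * Real.exp w * Real.exp (-(c * Real.exp w)) =
      (1/c) * ((1 + 1/c) * Real.exp (-c)) := by
  have hpos : ∀ x ∈ Ioi (0:ℝ), 0 ≤ Real.exp x * Real.exp x * Real.exp (-(c * Real.exp x)) :=
    fun x _ => by positivity
  constructor
  · exact integrableOn_Ioi_deriv_of_nonneg' (fun x _ => aux_d2 c hc x) hpos (aux_t2 c hc)
  · rw [integral_Ioi_of_hasDerivAt_of_nonneg' (fun x _ => aux_d2 c hc x) hpos (aux_t2 c hc)]
    simp

lemma aux_ptwise (c : ℝ) (hc : 0 < c) (w : ℝ) (hw : 0 < w) :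
    w * Real.exp (-(2*c) * Real.cosh w) * Real.sinh w ≤
      |Real.log c| * (Real.exp w * Real.exp (-(c * Real.exp w))) +
      c * (Real.exp w * Real.exp w * Real.exp (-(c * Real.exp w))) := by
  have hsinh : Real.sinh w ≤ Real.exp w := by
    rw [Real.sinh_eq]
    have h1 := Real.exp_pos (-w)
    have h2 := Real.exp_pos w
    linarith
  have hsinh0 : 0 ≤ Real.sinh w := by
    have : Real.exp (-w) ≤ Real.exp w := Real.exp_le_exp.2 (by linarith)
    rw [Real.sinh_eq]; linarith
  have hE : Real.exp (-(2*c) * Real.cosh w) ≤ Real.exp (-(c * Real.exp w)) := by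
    apply Real.exp_le_exp.2
    rw [Real.cosh_eq]
    have := Real.exp_pos (-w)
    nlinarith
  have hw2 : w ≤ |Real.log c| + c * Real.exp w := by
    have h1 : Real.log (c * Real.exp w) ≤ c * Real.exp w - 1 :=
      Real.log_le_sub_one_of_pos (by positivity)
    rw [Real.log_mul hc.ne' (Real.exp_pos w).ne', Real.log_exp] at h1
    have := neg_abs_le (Real.log c)
    linarith
  have hEpos : 0 < Real.exp (-(c * Real.exp w)) := Real.exp_pos _
  have hepos : 0 < Real.exp w := Real.exp_pos _
  calc w * Real.exp (-(2*c) * Real.cosh w) * Real.sinh w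
      ≤ w * Real.exp (-(c * Real.exp w)) * Real.exp w := by
        apply mul_le_mul _ hsinh hsinh0 (by positivity)
        exact mul_le_mul_of_nonneg_left hE hw.le
    _ ≤ (|Real.log c| + c * Real.exp w) * Real.exp (-(c * Real.exp w)) * Real.exp w := by
        apply mul_le_mul_of_nonneg_right _ hepos.le
        exact mul_le_mul_of_nonneg_right hw2 hEpos.le
    _ = |Real.log c| * (Real.exp w * Real.exp (-(c * Real.exp w))) +
      c * (Real.exp w * Real.exp w * Real.exp (-(c * Real.exp w))) := by ring

/-- For every `r > 0`, `w ↦ w e^{-r cosh w} sinh w` is integrable on `(0, ∞)` with integral at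
most `C r⁻¹ (1 + |log r|)` for a universal constant `C`. -/
theorem integrable_w_exp_cosh_sinh :
    ∃ C > (0 : ℝ), ∀ r > (0 : ℝ),
      IntegrableOn (fun w : ℝ => w * Real.exp (-r * Real.cosh w) * Real.sinh w) (Ioi 0) ∧
      ∫ w in Ioi (0 : ℝ), w * Real.exp (-r * Real.cosh w) * Real.sinh w ≤
        C * r⁻¹ * (1 + |Real.log r|) := by
  refine ⟨4, by norm_num, fun r hr => ?_⟩
  have hc : 0 < r / 2 := by linarith
  set c := r / 2 with hc_def
  obtain ⟨hI1, hJ1⟩ := aux_int1 c hc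
  obtain ⟨hI2, hJ2⟩ := aux_int2 c hc
  set G := fun w => |Real.log c| * (Real.exp w * Real.exp (-(c * Real.exp w))) +
      c * (Real.exp w * Real.exp w * Real.exp (-(c * Real.exp w))) with hG_def
  have hG : IntegrableOn G (Ioi 0) := (hI1.const_mul _).add (hI2.const_mul _)
  have hr2c : -r = -(2 * c) := by rw [hc_def]; ring
  have hfG : ∀ w ∈ Ioi (0:ℝ), w * Real.exp (-r * Real.cosh w) * Real.sinh w ≤ G w := by
    intro w hw
    rw [hr2c]
    exact aux_ptwise c hc w hw
  have hsinh : ∀ w : ℝ, 0 < w → 0 ≤ Real.sinh w := by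
    intro w hw
    have : Real.exp (-w) ≤ Real.exp w := Real.exp_le_exp.2 (by linarith)
    rw [Real.sinh_eq]; linarith
  have hcont : Continuous (fun w : ℝ => w * Real.exp (-r * Real.cosh w) * Real.sinh w) := by
    fun_prop
  have hf_int : IntegrableOn (fun w : ℝ => w * Real.exp (-r * Real.cosh w) * Real.sinh w)
      (Ioi 0) := by
    apply hG.mono' hcont.aestronglyMeasurable.restrict
    filter_upwards [ae_restrict_mem measurableSet_Ioi] with w hw
    rw [Real.norm_eq_abs, abs_of_nonneg]
    · exact hfG w hw
    · have := hsinh w hw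
      have := Real.exp_pos (-r * Real.cosh w)
      have : (0:ℝ) < w := hw
      positivity
  refine ⟨hf_int, ?_⟩
  have hle : ∫ w in Ioi (0:ℝ), w * Real.exp (-r * Real.cosh w) * Real.sinh w ≤
      ∫ w in Ioi (0:ℝ), G w :=
    setIntegral_mono_on hf_int hG measurableSet_Ioi hfG
  have hGval : ∫ w in Ioi (0:ℝ), G w =
      |Real.log c| * ((1/c) * Real.exp (-c)) + c * ((1/c) * ((1 + 1/c) * Real.exp (-c))) := by
    rw [hG_def]
    rw [integral_add (hI1.const_mul _) (hI2.const_mul _), integral_const_mul,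
      integral_const_mul, hJ1, hJ2]
  have hE1 : Real.exp (-c) ≤ 1 := Real.exp_le_one_iff.2 (by linarith)
  have hE0 : 0 < Real.exp (-c) := Real.exp_pos _
  have h1c : (1 + c) * Real.exp (-c) ≤ 1 := by
    have h := Real.add_one_le_exp c
    have h5 : Real.exp c * Real.exp (-c) = 1 := by rw [← Real.exp_add]; simp
    nlinarith [mul_le_mul_of_nonneg_right h hE0.le]
  have habs : 0 ≤ |Real.log c| := abs_nonneg _
  have key : |Real.log c| * ((1/c) * Real.exp (-c)) +
      c * ((1/c) * ((1 + 1/c) * Real.exp (-c))) ≤ (|Real.log c| + 1) / c := by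
    have e1 : c * ((1/c) * ((1 + 1/c) * Real.exp (-c))) = (1 + c) * Real.exp (-c) * (1/c) := by
      field_simp
      ring
    have t1 : |Real.log c| * ((1/c) * Real.exp (-c)) ≤ |Real.log c| * (1/c) := by
      have : (1/c) * Real.exp (-c) ≤ (1/c) * 1 :=
        mul_le_mul_of_nonneg_left hE1 (by positivity)
      rw [mul_one] at this
      exact mul_le_mul_of_nonneg_left this habs
    have t2 : (1 + c) * Real.exp (-c) * (1/c) ≤ 1 * (1/c) :=
      mul_le_mul_of_nonneg_right h1c (by positivity)
    rw [e1]
    calc |Real.log c| * ((1/c) * Real.exp (-c)) + (1 + c) * Real.exp (-c) * (1/c)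
        ≤ |Real.log c| * (1/c) + 1 * (1/c) := add_le_add t1 t2
      _ = (|Real.log c| + 1) / c := by ring
  have hlog : |Real.log c| ≤ |Real.log r| + 1 := by
    have h2 : Real.log c = Real.log r - Real.log 2 := by
      rw [hc_def, Real.log_div hr.ne' two_ne_zero]
    have h3 : Real.log 2 ≤ 1 := by
      have := Real.log_le_sub_one_of_pos (two_pos : (0:ℝ) < 2)
      linarith
    have h4 : 0 ≤ Real.log 2 := Real.log_nonneg one_le_two
    rw [h2]
    calc |Real.log r - Real.log 2| ≤ |Real.log r| + |Real.log 2| := abs_sub _ _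
      _ ≤ |Real.log r| + 1 := by rw [abs_of_nonneg h4]; linarith
  have final : (|Real.log c| + 1) / c ≤ 4 * r⁻¹ * (1 + |Real.log r|) := by
    have h4 : 4 * r⁻¹ * (1 + |Real.log r|) = (2 * (1 + |Real.log r|)) / c := by
      rw [hc_def]; field_simp; ring
    rw [h4]
    gcongr
    linarith [hlog, abs_nonneg (Real.log r)]
  linarith [hle, hGval.le, hGval.ge, key, final]
end

section
/- There exists C > 0 such that for all t ≥ 1, x ∈ ℝ, and y > 0, t · a_t(y; x) ≤ C e^{x²/(2t)} y^{-2} e^{x - (1+e^{2x})/(2y)} (1 + y e^{-x} |x - log y|), where a_t is defined via Yor's function θ_r as a_t(y;x) = √(2πt) e^{x²/(2t)} y^{-1} e^{-(1+e^{2x})/(2y)} θ_{e^x/y}(t) with θ_r(t) = (r/√(2π³t)) e^{π²/(2t)} ∫₀^∞ e^{-w²/(2t)} e^{-r cosh w} sinh(w) sin(πw/t) dw. -/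
open MeasureTheory Real Set Filter
open Topology

noncomputable section

lemma tendsto_cosh_atTop' : Tendsto Real.cosh atTop atTop := by
  apply tendsto_atTop_mono (fun w => ?_) (Real.tendsto_exp_atTop.atTop_div_const two_pos)
  rw [Real.cosh_eq]
  have := Real.exp_pos (-w)
  linarith

lemma tendsto_exp_neg_cosh (r : ℝ) (hr : 0 < r) :
    Tendsto (fun w : ℝ => Real.exp (-(r * Real.cosh w))) atTop (𝓝 0) := by
  have h1 : Tendsto (fun w : ℝ => r * Real.cosh w) atTop atTop :=
    tendsto_cosh_atTop'.const_mul_atTop hr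
  exact Real.tendsto_exp_atBot.comp (tendsto_neg_atTop_atBot.comp h1)

lemma intA (r : ℝ) (hr : 0 < r) :
    IntegrableOn (fun w => Real.sinh w * Real.exp (-(r * Real.cosh w))) (Ioi (0:ℝ)) ∧
    ∫ w in Ioi (0:ℝ), Real.sinh w * Real.exp (-(r * Real.cosh w)) = Real.exp (-r) / r := by
  have hderiv : ∀ w ∈ Ici (0:ℝ),
      HasDerivAt (fun w => -Real.exp (-(r * Real.cosh w)) / r)
        (Real.sinh w * Real.exp (-(r * Real.cosh w))) w := by
    intro w _
    have h1 : HasDerivAt (fun w : ℝ => -(r * Real.cosh w)) (-(r * Real.sinh w)) w :=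
      (((Real.hasDerivAt_cosh w).const_mul r).neg)
    have h2 := (h1.exp).neg.div_const r
    refine h2.congr_deriv ?_
    rw [div_eq_iff hr.ne']
    ring
  have hpos : ∀ w ∈ Ioi (0:ℝ), 0 ≤ Real.sinh w * Real.exp (-(r * Real.cosh w)) :=
    fun w hw => mul_nonneg (Real.sinh_nonneg_iff.2 (le_of_lt hw)) (Real.exp_pos _).le
  have htend : Tendsto (fun w => -Real.exp (-(r * Real.cosh w)) / r) atTop (𝓝 0) := by
    have := ((tendsto_exp_neg_cosh r hr).neg).div_const r
    simpa using this
  refine ⟨integrableOn_Ioi_deriv_of_nonneg' hderiv hpos htend, ?_⟩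
  rw [integral_Ioi_of_hasDerivAt_of_nonneg' hderiv hpos htend]
  simp [Real.cosh_zero]
  ring

lemma intB (r : ℝ) (hr : 0 < r) :
    IntegrableOn (fun w => Real.cosh w * (Real.sinh w * Real.exp (-(r * Real.cosh w))))
      (Ioi (0:ℝ)) ∧
    ∫ w in Ioi (0:ℝ), Real.cosh w * (Real.sinh w * Real.exp (-(r * Real.cosh w)))
      = (r + 1) * Real.exp (-r) / r ^ 2 := by
  have hderiv : ∀ w ∈ Ici (0:ℝ),
      HasDerivAt (fun w => -((r * Real.cosh w + 1) * Real.exp (-(r * Real.cosh w))) / r ^ 2)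
        (Real.cosh w * (Real.sinh w * Real.exp (-(r * Real.cosh w)))) w := by
    intro w _
    have h0 : HasDerivAt (fun w : ℝ => r * Real.cosh w + 1) (r * Real.sinh w) w :=
      ((Real.hasDerivAt_cosh w).const_mul r).add_const 1
    have h1 : HasDerivAt (fun w : ℝ => -(r * Real.cosh w)) (-(r * Real.sinh w)) w :=
      (((Real.hasDerivAt_cosh w).const_mul r).neg)
    have h2 := ((h0.mul h1.exp).neg).div_const (r ^ 2)
    refine h2.congr_deriv ?_
    rw [div_eq_iff (pow_ne_zero 2 hr.ne')]
    ring
  have hpos : ∀ w ∈ Ioi (0:ℝ),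
      0 ≤ Real.cosh w * (Real.sinh w * Real.exp (-(r * Real.cosh w))) :=
    fun w hw => mul_nonneg (Real.cosh_pos w).le
      (mul_nonneg (Real.sinh_nonneg_iff.2 (le_of_lt hw)) (Real.exp_pos _).le)
  have htend : Tendsto (fun w => -((r * Real.cosh w + 1) * Real.exp (-(r * Real.cosh w))) / r ^ 2)
      atTop (𝓝 0) := by
    have hv : Tendsto (fun v : ℝ => (v + 1) * Real.exp (-v)) atTop (𝓝 0) := by
      have h1 := Real.tendsto_pow_mul_exp_neg_atTop_nhds_zero 1
      have h2 : Tendsto (fun v : ℝ => Real.exp (-v)) atTop (𝓝 0) :=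
        Real.tendsto_exp_atBot.comp tendsto_neg_atTop_atBot
      have := h1.add h2
      simp only [pow_one, add_zero] at this
      convert this using 2 with v
      ring
    have hcomp : Tendsto (fun w : ℝ => (r * Real.cosh w + 1) * Real.exp (-(r * Real.cosh w)))
        atTop (𝓝 0) := hv.comp (tendsto_cosh_atTop'.const_mul_atTop hr)
    have := (hcomp.neg).div_const (r ^ 2)
    simpa using this
  refine ⟨integrableOn_Ioi_deriv_of_nonneg' hderiv hpos htend, ?_⟩
  rw [integral_Ioi_of_hasDerivAt_of_nonneg' hderiv hpos htend]
  rw [Real.cosh_zero]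
  field_simp
  ring



lemma w_le (r : ℝ) (hr : 0 < r) {w : ℝ} (hw : 0 ≤ w) :
    w ≤ max 1 (Real.log (4 / r)) + max 1 (Real.log (4 / r)) * r / 2 * Real.cosh w := by
  set W := max 1 (Real.log (4 / r)) with hWdef
  have hW1 : (1:ℝ) ≤ W := le_max_left _ _
  have hexpW : Real.exp (-W) ≤ r / 4 := by
    have h : Real.exp (-W) ≤ Real.exp (-Real.log (4 / r)) :=
      Real.exp_le_exp.2 (neg_le_neg (le_max_right 1 (Real.log (4 / r))))
    have h2 : Real.exp (-Real.log (4 / r)) = r / 4 := by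
      rw [Real.exp_neg, Real.exp_log (by positivity), inv_div]
    linarith
  have key : w ≤ W + W * Real.exp (w - W) := by
    rcases le_total w W with h | h
    · have : 0 ≤ W * Real.exp (w - W) := by positivity
      linarith
    · have h1 : (w - W) + 1 ≤ Real.exp (w - W) := Real.add_one_le_exp _
      nlinarith
  have h2 : W * Real.exp (w - W) ≤ W * r / 2 * Real.cosh w := by
    have e1 : Real.exp (w - W) = Real.exp (-W) * Real.exp w := by
      rw [← Real.exp_add]; ring_nf
    have e2 : Real.exp w ≤ 2 * Real.cosh w := by
      rw [Real.cosh_eq]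
      have := (Real.exp_pos (-w)).le
      linarith
    calc W * Real.exp (w - W) = W * (Real.exp (-W) * Real.exp w) := by rw [e1]
      _ ≤ W * ((r / 4) * (2 * Real.cosh w)) := by
          apply mul_le_mul_of_nonneg_left _ (by linarith)
          exact mul_le_mul hexpW e2 (Real.exp_pos w).le (by positivity)
      _ = W * r / 2 * Real.cosh w := by ring
  linarith

lemma keyNum (r : ℝ) (hr : 0 < r) :
    max 1 (Real.log (4 / r)) * Real.exp (-r) * ((3 + r) / 2) ≤ 100 * (r + |Real.log r|) := by
  set W := max 1 (Real.log (4 / r)) with hWdef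
  set L := |Real.log r| with hLdef
  have hW1 : (1:ℝ) ≤ W := le_max_left _ _
  have hL0 : 0 ≤ L := abs_nonneg _
  have hexp : Real.exp (-r) ≤ 1 := by
    rw [← Real.exp_zero]
    exact Real.exp_le_exp.2 (by linarith)
  have hE0 : 0 < Real.exp (-r) := Real.exp_pos _
  have hlog4 : Real.log 4 ≤ 3 := by
    have := Real.log_le_sub_one_of_pos (by norm_num : (0:ℝ) < 4); linarith
  rcases le_total 1 r with h1 | h1
  · have hW3 : W ≤ 3 := by
      apply max_le (by norm_num)
      rw [Real.log_div (by norm_num) (ne_of_gt hr)]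
      have := Real.log_nonneg h1
      linarith
    have l1 : W * Real.exp (-r) ≤ 3 := by nlinarith
    have l2 : W * Real.exp (-r) * ((3 + r) / 2) ≤ 3 * ((3 + r) / 2) :=
      mul_le_mul_of_nonneg_right l1 (by linarith)
    linarith
  · have hWL : W ≤ 3 + L := by
      apply max_le (by linarith)
      rw [Real.log_div (by norm_num) (ne_of_gt hr)]
      have := neg_abs_le (Real.log r)
      rw [← hLdef] at this
      linarith
    have l1 : W * Real.exp (-r) ≤ 3 + L := by nlinarith
    have l2 : W * Real.exp (-r) * ((3 + r) / 2) ≤ (3 + L) * 2 := by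
      have : W * Real.exp (-r) * ((3 + r) / 2) ≤ (3 + L) * ((3 + r) / 2) :=
        mul_le_mul_of_nonneg_right l1 (by linarith)
      nlinarith
    rcases le_total L 1 with h2 | h2
    · have hlogr : -1 ≤ Real.log r := by
        have := neg_abs_le (Real.log r); rw [← hLdef] at this; linarith
      have he : Real.exp (-1) ≤ r := by
        rw [← Real.exp_log hr]; exact Real.exp_le_exp.2 hlogr
      have h3 : (1:ℝ)/3 ≤ Real.exp (-1) := by
        rw [Real.exp_neg]
        rw [div_le_iff₀ (by norm_num : (0:ℝ) < 3)]
        rw [inv_mul_eq_div, le_div_iff₀ (Real.exp_pos 1)]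
        have := Real.exp_one_lt_d9
        linarith
      linarith
    · linarith


/-- Uniform bound: there is `C > 0` such that for all `t ≥ 1`, `x ∈ ℝ`, `y > 0`,
`t ⬝ a_t(y; x) ≤ C e^{x²/(2t)} y⁻² e^{x - (1 + e^{2x})/(2y)} (1 + y e^{-x} |x - log y|)`. -/
theorem mul_yorA_le :
    ∃ C > (0 : ℝ), ∀ t ≥ (1 : ℝ), ∀ x : ℝ, ∀ y > (0 : ℝ),
      t * yorA t y x ≤
        C * Real.exp (x ^ 2 / (2 * t)) * (y ^ 2)⁻¹ *
          Real.exp (x - (1 + Real.exp (2 * x)) / (2 * y)) *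
          (1 + y * Real.exp (-x) * |x - Real.log y|) := by
  refine ⟨100 * Real.exp (π ^ 2 / 2), by positivity, ?_⟩
  intro t ht x y hy
  have ht0 : (0:ℝ) < t := lt_of_lt_of_le one_pos ht
  rw [yorA, yorTheta]
  set r := Real.exp x / y with hrdef
  have hr : 0 < r := div_pos (Real.exp_pos x) hy
  set W := max 1 (Real.log (4 / r)) with hWdef
  have hW1 : (1:ℝ) ≤ W := le_max_left _ _
  obtain ⟨hintA, hvalA⟩ := intA r hr
  obtain ⟨hintB, hvalB⟩ := intB r hr
  set g : ℝ → ℝ := fun w => W * (Real.sinh w * Real.exp (-(r * Real.cosh w)))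
      + (W * r / 2) * (Real.cosh w * (Real.sinh w * Real.exp (-(r * Real.cosh w)))) with hgdef
  have hgint : IntegrableOn g (Ioi (0:ℝ)) := (hintA.const_mul W).add (hintB.const_mul (W*r/2))
  set Ig := ∫ w in Ioi (0:ℝ), g w with hIgdef
  have hgval : Ig = W * (Real.exp (-r)/r) + (W*r/2) * ((r+1)*Real.exp (-r)/r^2) := by
    rw [hIgdef, hgdef]
    rw [integral_add (hintA.const_mul W) (hintB.const_mul (W*r/2)),
      integral_const_mul, integral_const_mul, hvalA, hvalB]
  have hIg0 : 0 ≤ Ig := by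
    rw [hgval]; positivity
  set I := ∫ w in Ioi (0:ℝ),
      Real.exp (-w ^ 2 / (2 * t)) * Real.exp (-r * Real.cosh w) * Real.sinh w *
        Real.sin (π * w / t) with hIdef
  -- pointwise bound and integral bound
  have hIb : |I| ≤ (π / t) * Ig := by
    have hbd : ∀ w ∈ Ioi (0:ℝ),
        ‖Real.exp (-w ^ 2 / (2 * t)) * Real.exp (-r * Real.cosh w) * Real.sinh w *
          Real.sin (π * w / t)‖ ≤ (π / t) * g w := by
      intro w hw
      have hw0 : (0:ℝ) < w := hw
      have hsinh : 0 ≤ Real.sinh w := Real.sinh_nonneg_iff.2 hw0.le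
      have hE2 : (0:ℝ) < Real.exp (-r * Real.cosh w) := Real.exp_pos _
      have h1 : |Real.sin (π * w / t)| ≤ π * w / t := by
        have h := Real.abs_sin_le_abs (x := π * w / t)
        rwa [abs_of_nonneg (show (0:ℝ) ≤ π * w / t by positivity)] at h
      have h2 : Real.exp (-w ^ 2 / (2 * t)) ≤ 1 := by
        rw [show -w ^ 2 / (2 * t) = -(w ^ 2 / (2 * t)) by ring, ← Real.exp_zero]
        exact Real.exp_le_exp.2 (neg_nonpos.2 (by positivity))
      rw [Real.norm_eq_abs, abs_mul, abs_mul, abs_mul,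
        abs_of_nonneg (Real.exp_pos _).le, abs_of_nonneg hE2.le, abs_of_nonneg hsinh]
      calc Real.exp (-w ^ 2 / (2 * t)) * Real.exp (-r * Real.cosh w) * Real.sinh w *
            |Real.sin (π * w / t)|
          ≤ 1 * Real.exp (-r * Real.cosh w) * Real.sinh w * (π * w / t) := by
            gcongr
        _ = (π / t) * (w * (Real.sinh w * Real.exp (-(r * Real.cosh w)))) := by
            rw [neg_mul]; ring
        _ ≤ (π / t) * ((W + W * r / 2 * Real.cosh w) *
              (Real.sinh w * Real.exp (-(r * Real.cosh w)))) := by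
            apply mul_le_mul_of_nonneg_left _ (by positivity)
            exact mul_le_mul_of_nonneg_right (w_le r hr hw0.le) (by positivity)
        _ = (π / t) * g w := by rw [hgdef]; ring
    have hint : Integrable (fun w => (π / t) * g w) (volume.restrict (Ioi (0:ℝ))) :=
      hgint.const_mul _
    have := norm_integral_le_of_norm_le hint
      (((ae_restrict_iff' measurableSet_Ioi).2 (Filter.Eventually.of_forall hbd)))
    rw [Real.norm_eq_abs] at this
    rw [integral_const_mul] at this
    exact this
  -- simplify the sqrt quotient
  have hS1 : (0:ℝ) < Real.sqrt (2 * π * t) := Real.sqrt_pos.2 (by positivity)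
  have hS3 : Real.sqrt (2 * π ^ 3 * t) = π * Real.sqrt (2 * π * t) := by
    rw [show 2 * π ^ 3 * t = π ^ 2 * (2 * π * t) by ring,
      Real.sqrt_mul (by positivity), Real.sqrt_sq pi_pos.le]
  set E1 := Real.exp (x ^ 2 / (2 * t)) with hE1def
  set E2 := Real.exp (-(1 + Real.exp (2 * x)) / (2 * y)) with hE2def
  set E3 := Real.exp (π ^ 2 / (2 * t)) with hE3def
  have hE1 : (0:ℝ) < E1 := Real.exp_pos _
  have hE2 : (0:ℝ) < E2 := Real.exp_pos _
  have hE3 : (0:ℝ) < E3 := Real.exp_pos _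
  have heq : t * (Real.sqrt (2 * π * t) * E1 * y⁻¹ * E2 *
      (r / Real.sqrt (2 * π ^ 3 * t) * E3 * I)) = (t * r / π) * (E1 * y⁻¹ * E2 * E3) * I := by
    rw [hS3]
    field_simp
  rw [heq]
  have hcoef : (0:ℝ) ≤ (t * r / π) * (E1 * y⁻¹ * E2 * E3) := by positivity
  have step1 : (t * r / π) * (E1 * y⁻¹ * E2 * E3) * I ≤
      (t * r / π) * (E1 * y⁻¹ * E2 * E3) * ((π / t) * Ig) :=
    mul_le_mul_of_nonneg_left (le_trans (le_abs_self I) hIb) hcoef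
  have step2 : (t * r / π) * (E1 * y⁻¹ * E2 * E3) * ((π / t) * Ig) =
      (E1 * y⁻¹ * E2) * (E3 * (r * Ig)) := by
    field_simp
  have hrIg : r * Ig = W * Real.exp (-r) * ((3 + r) / 2) := by
    rw [hgval]
    field_simp
    ring
  have step3 : E3 * (r * Ig) ≤ Real.exp (π ^ 2 / 2) * (100 * (r + |Real.log r|)) := by
    have h3 : E3 ≤ Real.exp (π ^ 2 / 2) := by
      rw [hE3def]
      exact Real.exp_le_exp.2 (div_le_div_of_nonneg_left (by positivity) two_pos (by linarith))
    have h4 : r * Ig ≤ 100 * (r + |Real.log r|) := by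
      rw [hrIg]; exact keyNum r hr
    have h5 : (0:ℝ) ≤ r * Ig := mul_nonneg hr.le hIg0
    have h6 : (0:ℝ) ≤ 100 * (r + |Real.log r|) := by positivity
    calc E3 * (r * Ig) ≤ E3 * (100 * (r + |Real.log r|)) :=
          mul_le_mul_of_nonneg_left h4 hE3.le
      _ ≤ Real.exp (π ^ 2 / 2) * (100 * (r + |Real.log r|)) :=
          mul_le_mul_of_nonneg_right h3 h6
  have hlogr : |Real.log r| = |x - Real.log y| := by
    rw [hrdef, Real.log_div (Real.exp_ne_zero x) (ne_of_gt hy), Real.log_exp]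
  have final : (E1 * y⁻¹ * E2) * (Real.exp (π ^ 2 / 2) * (100 * (r + |Real.log r|))) =
      100 * Real.exp (π ^ 2 / 2) * E1 * (y ^ 2)⁻¹ *
        Real.exp (x - (1 + Real.exp (2 * x)) / (2 * y)) *
        (1 + y * Real.exp (-x) * |x - Real.log y|) := by
    rw [hlogr, hrdef, hE2def,
      show x - (1 + Real.exp (2 * x)) / (2 * y) = x + (-(1 + Real.exp (2 * x)) / (2 * y)) by ring,
      Real.exp_add, Real.exp_neg]
    field_simp
  calc (t * r / π) * (E1 * y⁻¹ * E2 * E3) * I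
      ≤ (t * r / π) * (E1 * y⁻¹ * E2 * E3) * ((π / t) * Ig) := step1
    _ = (E1 * y⁻¹ * E2) * (E3 * (r * Ig)) := step2
    _ ≤ (E1 * y⁻¹ * E2) * (Real.exp (π ^ 2 / 2) * (100 * (r + |Real.log r|))) :=
        mul_le_mul_of_nonneg_left step3 (by positivity)
    _ = _ := final


end
end

section
/- Let 𝓑 be a two-sided Bessel-3 process and ρ_∞(x) = e^{−𝓑(x)}/∫_ℝ e^{−𝓑}. Then for almost every realization of 𝓑, the function x ↦ ∫_ℝ e^{−𝓑(y)} e^{−𝓑(y+x)} dy decays faster than any polynomial as |x| → ∞; in particular the quenched density of the limiting localization length, which is proportional to this function, has finite moments of all orders. -/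
open MeasureTheory ProbabilityTheory Real Set Filter
open scoped NNReal ENNReal

noncomputable section

def IsStandardBM {Ω : Type*} [MeasureSpace Ω] (B : ℝ → Ω → ℝ) : Prop :=
  (∀ t, Measurable (B t)) ∧
  (∀ ω, B 0 ω = 0) ∧
  (∀ ω, Continuous fun t => B t ω) ∧
  (∀ s t : ℝ, 0 ≤ s → s ≤ t →
    Measure.map (fun ω => B t ω - B s ω) ℙ = gaussianReal 0 (Real.toNNReal (t - s))) ∧
  (∀ n : ℕ, ∀ t : Fin (n + 1) → ℝ, Monotone t → 0 ≤ t 0 →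
    iIndepFun
      (fun i : Fin n => fun ω => B (t i.succ) ω - B (t i.castSucc) ω) ℙ)

/-- A standard three-dimensional Brownian motion: independent standard BM coordinates. -/
def IsStandardBM3 {Ω : Type*} [MeasureSpace Ω] (B : ℝ → Ω → Fin 3 → ℝ) : Prop :=
  (∀ i : Fin 3, IsStandardBM fun t ω => B t ω i) ∧
  iIndepFun (fun (i : Fin 3) (ω : Ω) => fun t : ℝ => B t ω i) ℙ

/-- Euclidean norm on `Fin 3 → ℝ`. -/
def enorm3 (v : Fin 3 → ℝ) : ℝ := Real.sqrt (∑ i, v i ^ 2)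

/-- The standard (one-sided) Bessel-3 process associated to a 3D Brownian motion. -/
def bessel3 {Ω : Type*} (W : ℝ → Ω → Fin 3 → ℝ) (t : ℝ) (ω : Ω) : ℝ := enorm3 (W t ω)

/-- The two-sided Bessel-3 process built from two independent 3D Brownian motions. -/
def twoSidedBessel3 {Ω : Type*} (W₁ W₂ : ℝ → Ω → Fin 3 → ℝ) (x : ℝ) (ω : Ω) : ℝ :=
  if 0 ≤ x then enorm3 (W₁ x ω) else enorm3 (W₂ (-x) ω)

/-- Hypotheses defining a two-sided Bessel-3 process driven by `W₁, W₂`. -/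
def TwoSidedBM3Pair {Ω : Type*} [MeasureSpace Ω] (W₁ W₂ : ℝ → Ω → Fin 3 → ℝ) : Prop :=
  IsStandardBM3 W₁ ∧ IsStandardBM3 W₂ ∧
    IndepFun (fun ω => fun t : ℝ => W₁ t ω) (fun ω => fun t : ℝ => W₂ t ω) ℙ

lemma exp_neg_le_pow (n : ℕ) (hn : n ≠ 0) {y : ℝ} (hy : 0 < y) :
    Real.exp (-y) ≤ ((n : ℝ) / y) ^ n := by
  have hn' : (0:ℝ) < n := by positivity
  have h1 : y / n ≤ Real.exp (y / n) := by
    nlinarith [Real.add_one_le_exp (y / n)]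
  have h2 : (y / n) ^ n ≤ Real.exp y := by
    calc (y / n) ^ n ≤ Real.exp (y / n) ^ n := by
          exact pow_le_pow_left₀ (by positivity) h1 n
      _ = Real.exp y := by
          rw [← Real.exp_nat_mul]
          congr 1
          field_simp
  have hyn : (0:ℝ) < (y / n) ^ n := by positivity
  rw [Real.exp_neg]
  calc (Real.exp y)⁻¹ ≤ ((y / n) ^ n)⁻¹ := by
        exact inv_anti₀ hyn h2
    _ = ((n : ℝ) / y) ^ n := by
        rw [← inv_pow, inv_div]

lemma integrable_of_le_aux {u : ℝ → ℝ} (hm : AEStronglyMeasurable u volume) {R A C : ℝ}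
    (hR : 1 ≤ R) (hC : 0 ≤ C)
    (h1 : ∀ y : ℝ, |y| ≤ R → |u y| ≤ A) (h2 : ∀ y : ℝ, R < |y| → |u y| ≤ C / y ^ 2) :
    Integrable u := by
  have hA : 0 ≤ A := le_trans (abs_nonneg _) (h1 0 (by simp; linarith))
  set g : ℝ → ℝ := fun y => Set.indicator (Icc (-R) R) (fun _ => A) y + 2 * C * (1 + y ^ 2)⁻¹
    with hg
  have hgint : Integrable g := by
    apply Integrable.add
    · rw [integrable_indicator_iff measurableSet_Icc]
      exact integrableOn_const (by rw [Real.volume_Icc]; exact ENNReal.ofReal_ne_top)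
    · simpa [mul_comm] using (integrable_inv_one_add_sq).const_mul (2 * C)
  refine hgint.mono' hm (ae_of_all _ fun y => ?_)
  rw [Real.norm_eq_abs]
  by_cases hy : |y| ≤ R
  · have : Set.indicator (Icc (-R) R) (fun _ => A) y = A := by
      rw [Set.indicator_of_mem]
      exact abs_le.1 hy |> fun ⟨a, b⟩ => ⟨a, b⟩
    rw [hg]
    simp only [this]
    have : 0 ≤ 2 * C * (1 + y ^ 2)⁻¹ := by positivity
    linarith [h1 y hy]
  · push_neg at hy
    have hy1 : 1 ≤ y ^ 2 := by nlinarith [abs_nonneg y, sq_abs y]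
    have : Set.indicator (Icc (-R) R) (fun _ => A) y = 0 := by
      rw [Set.indicator_of_notMem]
      intro hmem
      exact hy.not_ge (abs_le.2 ⟨hmem.1, hmem.2⟩)
    rw [hg]
    simp only [this, zero_add]
    refine (h2 y hy).trans ?_
    rw [div_le_iff₀ (by positivity)]
    have h12 : (1 + y^2)⁻¹ * (1 + y ^ 2) = 1 := by
      field_simp
    have : C * (1 + y ^ 2) ≤ 2 * C * y ^ 2 := by nlinarith
    calc C = C * (1 + y^2) * (1 + y^2)⁻¹ := by field_simp
      _ ≤ 2 * C * y ^ 2 * (1 + y^2)⁻¹ := by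
          apply mul_le_mul_of_nonneg_right this (by positivity)
      _ = 2 * C * (1 + y^2)⁻¹ * y ^ 2 := by ring


-- exp(-r^(1/8)) ≤ (8m)^(8m) / r^m  for r > 0
lemma exp_neg_rpow_le (m : ℕ) (hm : m ≠ 0) {r : ℝ} (hr : 0 < r) :
    Real.exp (-(r ^ (8:ℝ)⁻¹)) ≤ ((8*m : ℕ) : ℝ) ^ (8*m : ℕ) / r ^ m := by
  have hu : 0 < r ^ (8:ℝ)⁻¹ := Real.rpow_pos_of_pos hr _
  have h8m : (8*m : ℕ) ≠ 0 := by positivity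
  have h := exp_neg_le_pow (8*m) h8m hu
  refine h.trans ?_
  rw [div_pow, div_le_div_iff₀ (by positivity) (by positivity)]
  have : (r ^ (8:ℝ)⁻¹) ^ (8*m : ℕ) = r ^ m := by
    rw [← Real.rpow_natCast (r ^ (8:ℝ)⁻¹) (8*m), ← Real.rpow_mul hr.le]
    rw [← Real.rpow_natCast r m]
    congr 1
    push_cast
    ring
  rw [this]

theorem analysis_main {b : ℝ → ℝ} (hb : Continuous b) (hb0 : ∀ y, 0 ≤ b y) {T : ℝ}
    (hT : 2 ≤ T) (hgrow : ∀ y : ℝ, T ≤ |y| → |y| ^ (8:ℝ)⁻¹ ≤ b y) :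
    (∀ p : ℕ, Tendsto
        (fun x : ℝ => |x| ^ p * ∫ y : ℝ, Real.exp (-(b y)) * Real.exp (-(b (y + x))))
        (Filter.cocompact ℝ) (nhds 0)) ∧
      (∀ p : ℕ, (∫⁻ x : ℝ, ENNReal.ofReal (|x| ^ p *
          ∫ y : ℝ, Real.exp (-(b y)) * Real.exp (-(b (y + x))))) < ⊤) := by
  set g : ℝ → ℝ := fun y => Real.exp (-(b y)) with hgdef
  have hg_cont : Continuous g := (hb.neg).rexp
  have hg_pos : ∀ y, 0 < g y := fun y => Real.exp_pos _
  have hg_le_one : ∀ y, g y ≤ 1 := fun y => Real.exp_le_one_iff.2 (neg_nonpos.2 (hb0 y))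
  have hg_decay : ∀ y : ℝ, T ≤ |y| → g y ≤ Real.exp (-(|y| ^ (8:ℝ)⁻¹)) := by
    intro y hy
    exact Real.exp_le_exp.2 (neg_le_neg (hgrow y hy))
  -- integrability of g
  have hg_int : Integrable g := by
    refine integrable_of_le_aux (A := 1) (C := ((8*2 : ℕ):ℝ)^(8*2 : ℕ))
      hg_cont.aestronglyMeasurable (le_trans one_le_two hT)
      (by positivity) (fun y _ => ?_) (fun y hy => ?_)
    · rw [abs_of_nonneg (hg_pos y).le]; exact hg_le_one y
    · rw [abs_of_nonneg (hg_pos y).le]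
      have hy0 : 0 < |y| := lt_of_le_of_lt (by linarith) hy
      have := (hg_decay y hy.le).trans (exp_neg_rpow_le 2 (by norm_num) hy0)
      simpa [sq_abs] using this
  set M : ℝ := ∫ y, g y with hM
  have hM0 : 0 ≤ M := integral_nonneg (fun y => (hg_pos y).le)
  have hgx_meas : ∀ x : ℝ, Continuous (fun y => g y * g (y + x)) := by
    intro x
    exact hg_cont.mul (hg_cont.comp (continuous_id.add continuous_const))
  have hgx_int : ∀ x : ℝ, Integrable (fun y => g y * g (y + x)) := by
    intro x
    refine hg_int.mono' (hgx_meas x).aestronglyMeasurable (ae_of_all _ fun y => ?_)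
    rw [Real.norm_eq_abs, abs_of_nonneg (by positivity)]
    calc g y * g (y + x) ≤ g y * 1 := by
          exact mul_le_mul_of_nonneg_left (hg_le_one _) (hg_pos y).le
      _ = g y := mul_one _
  set f : ℝ → ℝ := fun x => ∫ y, g y * g (y + x) with hf
  have hf_nonneg : ∀ x, 0 ≤ f x := fun x => integral_nonneg (fun y => by positivity)
  have hf_le_M : ∀ x, f x ≤ M := by
    intro x
    refine integral_mono (hgx_int x) hg_int (fun y => ?_)
    calc g y * g (y + x) ≤ g y * 1 :=
          mul_le_mul_of_nonneg_left (hg_le_one _) (hg_pos y).le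
      _ = g y := mul_one _
  -- translation invariance
  have hshift : ∀ x : ℝ, (∫ y, g (y + x)) = M := fun x => integral_add_right_eq_self g x
  -- key decay bound
  have hfd : ∀ x : ℝ, 2 * T ≤ |x| →
      f x ≤ Real.exp (-((|x| / 2) ^ (8:ℝ)⁻¹)) * (2 * M) := by
    intro x hx
    set E := Real.exp (-((|x| / 2) ^ (8:ℝ)⁻¹)) with hE
    have hE0 : 0 ≤ E := (Real.exp_pos _).le
    have hptwise : ∀ y : ℝ, g y * g (y + x) ≤ E * (g y + g (y + x)) := by
      intro y
      have key : ∀ z : ℝ, |x| / 2 ≤ |z| → g z ≤ E := by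
        intro z hz
        have hTz : T ≤ |z| := le_trans (by linarith) hz
        refine (hg_decay z hTz).trans ?_
        rw [hE]
        apply Real.exp_le_exp.2
        apply neg_le_neg
        exact Real.rpow_le_rpow (by positivity) hz (by norm_num)
      rcases le_or_gt (|x| / 2) (|y|) with hy | hy
      · calc g y * g (y + x) ≤ E * g (y + x) :=
              mul_le_mul_of_nonneg_right (key y hy) (hg_pos _).le
          _ ≤ E * (g y + g (y + x)) := by
              apply mul_le_mul_of_nonneg_left _ hE0
              linarith [(hg_pos y).le]
      · have hyx : |x| / 2 ≤ |y + x| := by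
          have : |x| ≤ |y| + |y + x| := by
            calc |x| = |(y + x) - y| := by ring_nf
              _ ≤ |y + x| + |y| := abs_sub _ _
              _ = |y| + |y + x| := by ring
          linarith
        calc g y * g (y + x) ≤ g y * E :=
              mul_le_mul_of_nonneg_left (key _ hyx) (hg_pos _).le
          _ = E * g y := mul_comm _ _
          _ ≤ E * (g y + g (y + x)) := by
              apply mul_le_mul_of_nonneg_left _ hE0
              linarith [(hg_pos (y+x)).le]
    calc f x ≤ ∫ y, E * (g y + g (y + x)) := by
          refine integral_mono (hgx_int x) ?_ hptwise
          exact ((hg_int.add (hg_int.comp_add_right x))).const_mul E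
      _ = E * (M + M) := by
          rw [integral_const_mul, integral_add hg_int (hg_int.comp_add_right x), hshift]
      _ = E * (2 * M) := by ring
  -- continuity of f
  have hf_cont : Continuous f := by
    rw [continuous_iff_continuousAt]
    intro x₀
    refine continuousAt_of_dominated (bound := g) ?_ ?_ hg_int ?_
    · exact Eventually.of_forall fun x => (hgx_meas x).aestronglyMeasurable
    · refine Eventually.of_forall fun x => ae_of_all _ fun y => ?_
      rw [Real.norm_eq_abs, abs_of_nonneg (by positivity)]
      calc g y * g (y + x) ≤ g y * 1 :=
            mul_le_mul_of_nonneg_left (hg_le_one _) (hg_pos y).le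
        _ = g y := mul_one _
    · refine ae_of_all _ fun y => ?_
      exact ((hg_cont.comp (continuous_const.add continuous_id)).continuousAt).const_mul _
  -- polynomial decay bound
  have hpoly : ∀ p : ℕ, ∀ x : ℝ, max (2 * T) 1 < |x| →
      |x| ^ p * f x ≤ ((2*M) * ((8*(p+2) : ℕ):ℝ)^(8*(p+2)) * 2^(p+2)) / x ^ 2 := by
    intro p x hx
    have hx1 : (1:ℝ) < |x| := lt_of_le_of_lt (le_max_right _ _) hx
    have hx0 : (0:ℝ) < |x| := by linarith
    have hxT : 2 * T ≤ |x| := le_of_lt (lt_of_le_of_lt (le_max_left _ _) hx)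
    have h1 := hfd x hxT
    have h2 : Real.exp (-((|x| / 2) ^ (8:ℝ)⁻¹)) ≤
        ((8*(p+2) : ℕ):ℝ)^(8*(p+2)) / (|x|/2) ^ (p+2) :=
      exp_neg_rpow_le (p+2) (by norm_num) (by positivity)
    set K : ℝ := ((8*(p+2) : ℕ):ℝ)^(8*(p+2)) with hK
    have hK0 : 0 < K := by positivity
    have hfx : f x ≤ K / (|x|/2) ^ (p+2) * (2 * M) := by
      refine h1.trans ?_
      exact mul_le_mul_of_nonneg_right h2 (by linarith)
    have habs2 : |x| ^ (p + 2) = |x| ^ p * x ^ 2 := by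
      rw [pow_add, sq_abs]
    calc |x| ^ p * f x ≤ |x| ^ p * (K / (|x|/2) ^ (p+2) * (2 * M)) := by
          exact mul_le_mul_of_nonneg_left hfx (by positivity)
      _ = (2*M) * K * 2^(p+2) / x ^ 2 := by
          have h2x : (0:ℝ) < x ^ 2 := by nlinarith [sq_abs x]
          rw [div_pow, habs2]
          field_simp
  -- eventual membership in cocompact
  have hmem : {x : ℝ | max (2 * T) 1 < |x|} ∈ cocompact ℝ := by
    rw [mem_cocompact]
    refine ⟨Icc (-(max (2 * T) 1)) (max (2 * T) 1), isCompact_Icc, fun x hx => ?_⟩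
    simp only [mem_compl_iff, mem_Icc, not_and_or, not_le] at hx
    simp only [mem_setOf_eq]
    rcases hx with hx | hx
    · rw [abs_of_neg (by nlinarith [le_max_right (2*T) (1:ℝ)])]; linarith
    · rw [abs_of_pos (by nlinarith [le_max_right (2*T) (1:ℝ)])]; linarith
  have hsq_cocompact : Tendsto (fun x : ℝ => x ^ 2) (cocompact ℝ) atTop := by
    have h1 : Tendsto (fun x : ℝ => |x|) (cocompact ℝ) atTop := by
      rw [cocompact_eq_atBot_atTop]
      rw [tendsto_sup]
      exact ⟨tendsto_abs_atBot_atTop, tendsto_abs_atTop_atTop⟩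
    have h2 : Tendsto (fun r : ℝ => r ^ 2) atTop atTop := tendsto_pow_atTop (by norm_num)
    have := h2.comp h1
    refine this.congr fun x => ?_
    simp [sq_abs]
  constructor
  · -- conclusion 1
    intro p
    set C : ℝ := (2*M) * ((8*(p+2) : ℕ):ℝ)^(8*(p+2)) * 2^(p+2) with hC
    have hC0 : 0 ≤ C := by positivity
    refine squeeze_zero' (g := fun x : ℝ => C / x ^ 2) ?_ ?_ ?_
    · exact Eventually.of_forall fun x => by positivity
    · filter_upwards [hmem] with x hx
      exact hpoly p x hx
    · have : Tendsto (fun x : ℝ => (x ^ 2)⁻¹) (cocompact ℝ) (nhds 0) :=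
        hsq_cocompact.inv_tendsto_atTop
      have := this.const_mul C
      rw [mul_zero] at this
      refine this.congr fun x => ?_
      rw [div_eq_mul_inv]
  · -- conclusion 2
    intro p
    set C : ℝ := (2*M) * ((8*(p+2) : ℕ):ℝ)^(8*(p+2)) * 2^(p+2) with hC
    have hC0 : 0 ≤ C := by positivity
    set R₁ : ℝ := max (2 * T) 1 with hR₁
    have hφ_int : Integrable (fun x => |x| ^ p * f x) := by
      refine integrable_of_le_aux (R := R₁) (A := R₁ ^ p * M) (C := C)
        ((continuous_abs.pow p).mul hf_cont).aestronglyMeasurable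
        (le_max_right _ _) hC0 (fun x hx => ?_) (fun x hx => ?_)
      · rw [abs_of_nonneg (by positivity)]
        have h1 : |x| ^ p ≤ R₁ ^ p := pow_le_pow_left₀ (abs_nonneg x) hx p
        exact mul_le_mul h1 (hf_le_M x) (hf_nonneg x) (by positivity)
      · rw [abs_of_nonneg (by positivity)]
        exact hpoly p x hx
    have heq : ∫⁻ x : ℝ, ENNReal.ofReal (|x| ^ p * f x) =
        ENNReal.ofReal (∫ x, |x| ^ p * f x) := by
      rw [ofReal_integral_eq_lintegral_ofReal hφ_int
        (ae_of_all _ fun x => by positivity)]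
    rw [heq]
    exact ENNReal.ofReal_lt_top


lemma gaussian_map_neg (v : ℝ≥0) :
    Measure.map (fun x : ℝ => -x) (gaussianReal 0 v) = gaussianReal 0 v := by
  have h := gaussianReal_map_const_mul (μ := 0) (v := v) (-1)
  have h2 : (fun x : ℝ => (-1) * x) = (fun x : ℝ => -x) := by funext x; ring
  rw [h2] at h
  rw [h]
  congr 1
  · ring
  · ext
    simp

lemma gaussian_Iio_eq_Ioi (v : ℝ≥0) :
    gaussianReal 0 v (Iio 0) = gaussianReal 0 v (Ioi 0) := by
  conv_rhs => rw [← gaussian_map_neg v]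
  rw [Measure.map_apply measurable_neg measurableSet_Ioi]
  congr 1
  ext x
  simp

lemma gaussian_Ici_zero_half (v : ℝ≥0) : (1/2 : ℝ≥0∞) ≤ gaussianReal 0 v (Ici 0) := by
  have hu : gaussianReal 0 v (Iio 0) + gaussianReal 0 v (Ici 0) = 1 := by
    rw [← measure_union (Iio_disjoint_Ici le_rfl) measurableSet_Ici, Iio_union_Ici,
      measure_univ]
  have h2 : gaussianReal 0 v (Iio 0) ≤ gaussianReal 0 v (Ici 0) := by
    rw [gaussian_Iio_eq_Ioi]
    exact measure_mono Ioi_subset_Ici_self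
  have h3 : (1:ℝ≥0∞) ≤ 2 * gaussianReal 0 v (Ici 0) := by
    rw [two_mul, ← hu]
    exact add_le_add_left h2 _
  rw [ENNReal.div_le_iff (by norm_num) (by norm_num)]
  rwa [mul_comm] at h3

lemma gaussian_Iic_zero_half (v : ℝ≥0) : (1/2 : ℝ≥0∞) ≤ gaussianReal 0 v (Iic 0) := by
  have hu : gaussianReal 0 v (Iic 0) + gaussianReal 0 v (Ioi 0) = 1 := by
    rw [← measure_union (Iic_disjoint_Ioi le_rfl) measurableSet_Ioi, Iic_union_Ioi,
      measure_univ]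
  have h2 : gaussianReal 0 v (Ioi 0) ≤ gaussianReal 0 v (Iic 0) := by
    rw [← gaussian_Iio_eq_Ioi]
    exact measure_mono Iio_subset_Iic_self
  have h3 : (1:ℝ≥0∞) ≤ 2 * gaussianReal 0 v (Iic 0) := by
    rw [two_mul]
    calc (1:ℝ≥0∞) = _ := hu.symm
      _ ≤ _ := add_le_add_right h2 _
  rw [ENNReal.div_le_iff (by norm_num) (by norm_num)]
  rwa [mul_comm] at h3

lemma gaussian_tail {v : ℝ≥0} (hv : v ≠ 0) {l : ℝ} (hl : 0 < l) :
    gaussianReal 0 v (Ici l) ≤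
      ENNReal.ofReal (Real.sqrt v / l * Real.exp (-(l^2) / (2*v))) := by
  have hv0 : (0:ℝ) < v := lt_of_le_of_ne v.coe_nonneg (by exact_mod_cast hv.symm)
  set c : ℝ := (Real.sqrt (2 * Real.pi * v))⁻¹ with hc
  have hc0 : 0 < c := by
    rw [hc]
    apply inv_pos.2
    apply Real.sqrt_pos.2
    positivity
  -- pdf formula
  have hpdf : ∀ x : ℝ, gaussianPDFReal 0 v x = c * Real.exp (-x^2 / (2*v)) := by
    intro x
    rw [gaussianPDFReal]
    simp [hc]
  -- antiderivative
  set F : ℝ → ℝ := fun x => -(v:ℝ) * c * Real.exp (-x^2 / (2*v)) with hF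
  have hderiv : ∀ x : ℝ, HasDerivAt F (c * (x * Real.exp (-x^2 / (2*v)))) x := by
    intro x
    have h1 : HasDerivAt (fun x : ℝ => -x^2 / (2*v)) (-(2*x) / (2*v)) x := by
      have := ((hasDerivAt_pow 2 x).neg).div_const (2*(v:ℝ))
      simpa using this
    have h2 := (h1.exp).const_mul (-(v:ℝ) * c)
    refine h2.congr_deriv ?_
    field_simp
  have htends : Tendsto F atTop (nhds 0) := by
    rw [hF]
    have h1 : Tendsto (fun x : ℝ => -x^2 / (2*v)) atTop atBot := by
      apply Tendsto.atBot_div_const (by positivity)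
      have hsq : Tendsto (fun x : ℝ => x ^ 2) atTop atTop := tendsto_pow_atTop (by norm_num)
      exact tendsto_neg_atTop_atBot.comp hsq
    have h2 : Tendsto (fun x : ℝ => Real.exp (-x^2 / (2*v))) atTop (nhds 0) :=
      Real.tendsto_exp_atBot.comp h1
    have := h2.const_mul (-(v:ℝ) * c)
    simpa using this
  have hint : IntegrableOn (fun x => c * (x * Real.exp (-x^2 / (2*v)))) (Ioi l) := by
    refine integrableOn_Ioi_deriv_of_nonneg (hderiv l).continuousAt.continuousWithinAt
      (fun x hx => hderiv x) (fun x hx => ?_) htends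
    have hx0 : 0 < x := lt_trans hl hx
    positivity
  have hval : ∫ x in Ioi l, c * (x * Real.exp (-x^2 / (2*v)))
      = (v:ℝ) * c * Real.exp (-l^2 / (2*v)) := by
    rw [integral_Ioi_of_hasDerivAt_of_tendsto (hderiv l).continuousAt.continuousWithinAt
      (fun x _ => hderiv x) hint htends]
    rw [hF]
    ring
  -- compare
  rw [gaussianReal_apply_eq_integral 0 hv (Ici l)]
  apply ENNReal.ofReal_le_ofReal
  have hIci : ∫ x in Ici l, gaussianPDFReal 0 v x = ∫ x in Ioi l, gaussianPDFReal 0 v x :=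
    integral_Ici_eq_integral_Ioi
  rw [hIci]
  have hmono : ∫ x in Ioi l, gaussianPDFReal 0 v x
      ≤ ∫ x in Ioi l, (1/l) * (c * (x * Real.exp (-x^2 / (2*v)))) := by
    refine setIntegral_mono_on ((integrable_gaussianPDFReal 0 v).integrableOn)
      (hint.const_mul (1/l)) measurableSet_Ioi (fun x hx => ?_)
    rw [hpdf x]
    have hx : l < x := hx
    have h1 : 1 ≤ x / l := (one_le_div hl).2 hx.le
    have hexp : 0 < Real.exp (-x^2 / (2*v)) := Real.exp_pos _
    calc c * Real.exp (-x^2 / (2*v)) = 1 * (c * Real.exp (-x^2 / (2*v))) := by ring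
      _ ≤ (x / l) * (c * Real.exp (-x^2 / (2*v))) := by
          apply mul_le_mul_of_nonneg_right h1 (by positivity)
      _ = (1/l) * (c * (x * Real.exp (-x^2 / (2*v)))) := by ring
  refine hmono.trans ?_
  rw [integral_const_mul, hval]
  have hvc : (v:ℝ) * c ≤ Real.sqrt v := by
    rw [hc]
    rw [mul_inv_le_iff₀ (by positivity)]
    calc (v:ℝ) = Real.sqrt v * Real.sqrt v := (Real.mul_self_sqrt hv0.le).symm
      _ ≤ Real.sqrt v * Real.sqrt (2 * Real.pi * v) := by
          apply mul_le_mul_of_nonneg_left _ (Real.sqrt_nonneg _)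
          apply Real.sqrt_le_sqrt
          nlinarith [Real.pi_gt_three, hv0]
  have hexp : 0 < Real.exp (-l^2 / (2*v)) := Real.exp_pos _
  calc (1/l) * ((v:ℝ) * c * Real.exp (-l^2 / (2*v)))
      ≤ (1/l) * (Real.sqrt v * Real.exp (-l^2 / (2*v))) := by
        apply mul_le_mul_of_nonneg_left _ (by positivity)
        exact mul_le_mul_of_nonneg_right hvc hexp.le
    _ = Real.sqrt v / l * Real.exp (-(l^2) / (2*v)) := by ring
  
lemma gaussian_Iic_tail {v : ℝ≥0} (hv : v ≠ 0) {l : ℝ} (hl : 0 < l) :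
    gaussianReal 0 v (Iic (-l)) ≤
      ENNReal.ofReal (Real.sqrt v / l * Real.exp (-(l^2) / (2*v))) := by
  have : gaussianReal 0 v (Iic (-l)) = gaussianReal 0 v (Ici l) := by
    conv_lhs => rw [← gaussian_map_neg v]
    rw [Measure.map_apply measurable_neg measurableSet_Iic]
    congr 1
    ext x
    simp
  rw [this]
  exact gaussian_tail hv hl

lemma gaussian_smallball {v : ℝ≥0} (hv : v ≠ 0) {a : ℝ} (ha : 0 ≤ a) :
    gaussianReal 0 v (Icc (-a) a) ≤ ENNReal.ofReal (a / Real.sqrt v) := by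
  have hv0 : (0:ℝ) < v := lt_of_le_of_ne v.coe_nonneg (by exact_mod_cast hv.symm)
  set c : ℝ := (Real.sqrt (2 * Real.pi * v))⁻¹ with hc
  have hc0 : 0 < c := by
    rw [hc]; apply inv_pos.2; apply Real.sqrt_pos.2; positivity
  rw [gaussianReal_apply_eq_integral 0 hv (Icc (-a) a)]
  apply ENNReal.ofReal_le_ofReal
  have hmono : ∫ x in Icc (-a) a, gaussianPDFReal 0 v x ≤ ∫ _x in Icc (-a) a, c := by
    refine setIntegral_mono_on ((integrable_gaussianPDFReal 0 v).integrableOn)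
      (integrableOn_const (by rw [Real.volume_Icc]; exact ENNReal.ofReal_ne_top))
      measurableSet_Icc (fun x _ => ?_)
    rw [gaussianPDFReal]
    have hexp1 : Real.exp (-(x - 0)^2 / (2*(v:ℝ))) ≤ 1 := by
      apply Real.exp_le_one_iff.2
      rw [neg_div]
      exact neg_nonpos.2 (by positivity)
    calc (Real.sqrt (2 * Real.pi * v))⁻¹ * Real.exp (-(x - 0)^2 / (2*(v:ℝ)))
        ≤ (Real.sqrt (2 * Real.pi * v))⁻¹ * 1 := by
          apply mul_le_mul_of_nonneg_left hexp1 hc0.le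
      _ = c := by rw [mul_one]
  refine hmono.trans ?_
  rw [setIntegral_const]
  rw [measureReal_def, Real.volume_Icc]
  have : (a - -a) = 2 * a := by ring
  rw [this, ENNReal.toReal_ofReal (by positivity)]
  rw [smul_eq_mul]
  -- 2 a c ≤ a / sqrt v
  rw [div_eq_mul_inv]
  have h1 : c ≤ (2 * Real.sqrt v)⁻¹ := by
    rw [hc]
    apply inv_anti₀ (by positivity)
    rw [show (2:ℝ) * Real.sqrt v = Real.sqrt 4 * Real.sqrt v by
      rw [show (4:ℝ) = 2^2 by norm_num, Real.sqrt_sq (by norm_num)]]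
    rw [← Real.sqrt_mul (by norm_num)]
    apply Real.sqrt_le_sqrt
    nlinarith [Real.pi_gt_three, hv0]
  calc 2 * a * c ≤ 2 * a * (2 * Real.sqrt v)⁻¹ := by
        apply mul_le_mul_of_nonneg_left h1 (by positivity)
    _ = a * (Real.sqrt v)⁻¹ := by
        rw [mul_inv]
        ring
  

lemma fin_sum_filter_lt_succ {N k : ℕ} (hk : k < N) (g : Fin N → ℝ) :
    ∑ i ∈ Finset.univ.filter (fun i : Fin N => (i:ℕ) < k + 1), g i
      = (∑ i ∈ Finset.univ.filter (fun i : Fin N => (i:ℕ) < k), g i) + g ⟨k, hk⟩ := by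
  have hset : Finset.univ.filter (fun i : Fin N => (i:ℕ) < k + 1)
      = insert (⟨k, hk⟩ : Fin N) (Finset.univ.filter (fun i : Fin N => (i:ℕ) < k)) := by
    ext i
    simp only [Finset.mem_filter, Finset.mem_univ, true_and, Finset.mem_insert, Fin.ext_iff]
    omega
  rw [hset, Finset.sum_insert (by simp)]
  ring

lemma fin_telescope {N : ℕ} (f : Fin (N+1) → ℝ) (k : ℕ) (hk : k ≤ N) :
    ∑ i ∈ Finset.univ.filter (fun i : Fin N => (i:ℕ) < k), (f i.succ - f i.castSucc)
      = f ⟨k, Nat.lt_succ_of_le hk⟩ - f ⟨0, Nat.succ_pos N⟩ := by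
  induction k with
  | zero => simp
  | succ k ih =>
    have hk' : k < N := hk
    rw [fin_sum_filter_lt_succ hk' (fun i => f i.succ - f i.castSucc), ih hk'.le]
    have h1 : (⟨k, hk'⟩ : Fin N).succ = (⟨k+1, Nat.lt_succ_of_le hk⟩ : Fin (N+1)) := rfl
    have h2 : (⟨k, hk'⟩ : Fin N).castSucc = (⟨k, Nat.lt_succ_of_le hk'.le⟩ : Fin (N+1)) := rfl
    rw [h1, h2]
    ring

set_option maxHeartbeats 1000000 in
lemma grid_levy {Ω : Type*} [MeasureSpace Ω] [IsProbabilityMeasure (ℙ : Measure Ω)]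
    {N : ℕ} {D : Fin N → Ω → ℝ} (hmeas : ∀ i, Measurable (D i))
    (hindep : iIndepFun D ℙ)
    (hsym : ∀ k : ℕ, k ≤ N → (1/2 : ℝ≥0∞) ≤
      ℙ {ω | ∑ i ∈ Finset.univ.filter (fun i : Fin N => (i:ℕ) < k), D i ω ≤ ∑ i, D i ω})
    (l : ℝ) :
    ℙ {ω | ∃ k : ℕ, k ≤ N ∧ l < ∑ i ∈ Finset.univ.filter (fun i : Fin N => (i:ℕ) < k), D i ω}
      ≤ 2 * ℙ {ω | l ≤ ∑ i, D i ω} := by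
  set S : ℕ → Ω → ℝ := fun k ω => ∑ i ∈ Finset.univ.filter (fun i : Fin N => (i:ℕ) < k), D i ω
    with hS
  have hSmeas : ∀ k, Measurable (S k) := fun k =>
    Finset.measurable_sum _ (fun i _ => hmeas i)
  have htot : ∀ ω, S N ω = ∑ i, D i ω := by
    intro ω
    rw [hS]
    simp only
    congr 1
    apply Finset.filter_true_of_mem
    exact fun i _ => i.isLt
  set A : ℕ → Set Ω := fun k =>
    (⋂ j ∈ Finset.range k, {ω | S j ω ≤ l}) ∩ {ω | l < S k ω} with hA
  have hAmem : ∀ k ω, ω ∈ A k ↔ (∀ j, j < k → S j ω ≤ l) ∧ l < S k ω := by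
    intro k ω
    simp [hA, Set.mem_iInter, Finset.mem_range]
  have hAmeasAmb : ∀ k, MeasurableSet (A k) := by
    intro k
    refine MeasurableSet.inter ?_ (measurableSet_lt measurable_const (hSmeas k))
    exact MeasurableSet.biInter (Finset.range k).countable_toSet
      (fun j _ => measurableSet_le (hSmeas j) measurable_const)
  have hcover : {ω | ∃ k : ℕ, k ≤ N ∧ l < S k ω} = ⋃ k ∈ Finset.range (N+1), A k := by
    ext ω
    simp only [mem_setOf_eq, Set.mem_iUnion, Finset.mem_range, Nat.lt_succ_iff]
    constructor
    · rintro ⟨k, hk, hlk⟩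
      have hex : ∃ m, l < S m ω := ⟨k, hlk⟩
      refine ⟨Nat.find hex, le_trans (Nat.find_min' hex hlk) hk, ?_⟩
      rw [hAmem]
      exact ⟨fun j hj => not_lt.1 (Nat.find_min hex hj), Nat.find_spec hex⟩
    · rintro ⟨k, hk, hmem⟩
      exact ⟨k, hk, ((hAmem k ω).1 hmem).2⟩
  have hdisj_key : ∀ a b : ℕ, a < b → Disjoint (A a) (A b) := by
    intro a b hab
    rw [Set.disjoint_left]
    intro ω hωa hωb
    exact absurd (((hAmem b ω).1 hωb).1 a hab) (not_le.2 ((hAmem a ω).1 hωa).2)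
  have hdisj : (↑(Finset.range (N+1)) : Set ℕ).PairwiseDisjoint A := by
    intro a _ b _ hab
    rcases lt_or_gt_of_ne hab with h | h
    · exact hdisj_key a b h
    · exact (hdisj_key b a h).symm
  -- independence
  set mD : Fin N → MeasurableSpace Ω := fun i => MeasurableSpace.comap (D i) inferInstance
    with hmD
  have hle : ∀ i, mD i ≤ (inferInstance : MeasurableSpace Ω) := fun i => (hmeas i).comap_le
  have hiI : iIndep mD ℙ := hindep.iIndep
  have hindep2 : ∀ k : ℕ,
      Indep (⨆ i ∈ {i : Fin N | (i:ℕ) < k}, mD i) (⨆ i ∈ {i : Fin N | k ≤ (i:ℕ)}, mD i) ℙ := by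
    intro k
    refine indep_iSup_of_disjoint hle hiI ?_
    rw [Set.disjoint_left]
    intro i hi hi'
    simp only [mem_setOf_eq] at hi hi'
    omega
  have hDmeasF : ∀ (s : Set (Fin N)) (i : Fin N), i ∈ s → Measurable[⨆ i ∈ s, mD i] (D i) := by
    intro s i hi
    refine Measurable.of_comap_le ?_
    exact le_iSup₂ (f := fun (i : Fin N) (_ : i ∈ s) => mD i) i hi
  have hSmeasF : ∀ k j : ℕ, j ≤ k → Measurable[⨆ i ∈ {i : Fin N | (i:ℕ) < k}, mD i] (S j) := by
    intro k j hj
    apply Finset.measurable_sum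
    intro i hi
    refine hDmeasF _ i ?_
    simp only [Finset.mem_filter] at hi
    simp only [mem_setOf_eq]
    omega
  have hAmeasF : ∀ k, MeasurableSet[⨆ i ∈ {i : Fin N | (i:ℕ) < k}, mD i] (A k) := by
    intro k
    refine MeasurableSet.inter ?_
      (measurableSet_lt measurable_const (hSmeasF k k le_rfl))
    exact MeasurableSet.biInter (Finset.range k).countable_toSet
      (fun j hj => measurableSet_le (hSmeasF k j (Finset.mem_range.1 hj).le) measurable_const)
  set C : ℕ → Set Ω := fun k => {ω | S k ω ≤ S N ω} with hC
  have hCmeasAmb : ∀ k, MeasurableSet (C k) :=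
    fun k => measurableSet_le (hSmeas k) (hSmeas N)
  have hsplit : ∀ k ω, S N ω - S k ω
      = ∑ i ∈ Finset.univ.filter (fun i : Fin N => ¬((i:ℕ) < k)), D i ω := by
    intro k ω
    have h := Finset.sum_filter_add_sum_filter_not Finset.univ
      (fun i : Fin N => (i:ℕ) < k) (fun i => D i ω)
    have h2 := htot ω
    rw [hS]
    simp only
    rw [← h] at h2
    linarith [h2]
  have hCmeasF : ∀ k, MeasurableSet[⨆ i ∈ {i : Fin N | k ≤ (i:ℕ)}, mD i] (C k) := by
    intro k
    have heq : C k = {ω | 0 ≤ ∑ i ∈ Finset.univ.filter (fun i : Fin N => ¬((i:ℕ) < k)), D i ω} := by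
      ext ω
      simp only [hC, mem_setOf_eq, ← hsplit k ω, sub_nonneg]
    rw [heq]
    refine measurableSet_le measurable_const ?_
    apply Finset.measurable_sum
    intro i hi
    refine hDmeasF _ i ?_
    simp only [Finset.mem_filter] at hi
    simp only [mem_setOf_eq]
    omega
  have hAC : ∀ k, ℙ (A k ∩ C k) = ℙ (A k) * ℙ (C k) :=
    fun k => (Indep_iff _ _ _).1 (hindep2 k) _ _ (hAmeasF k) (hCmeasF k)
  have hCsym : ∀ k, k ≤ N → (1/2 : ℝ≥0∞) ≤ ℙ (C k) := by
    intro k hk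
    have hCeq : C k = {ω | S k ω ≤ ∑ i, D i ω} := by
      ext ω
      simp only [hC, mem_setOf_eq]
      rw [htot ω]
    rw [hCeq]
    exact hsym k hk
  have hhalf : ∀ k, k ≤ N → ℙ (A k) ≤ 2 * ℙ (A k ∩ C k) := by
    intro k hk
    rw [hAC k]
    calc ℙ (A k) = 2 * ((1/2 : ℝ≥0∞) * ℙ (A k)) := by
          rw [← mul_assoc]
          rw [one_div, ENNReal.mul_inv_cancel (by norm_num) (by norm_num), one_mul]
      _ ≤ 2 * (ℙ (C k) * ℙ (A k)) := by
          apply mul_le_mul_right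
          exact mul_le_mul_left (hCsym k hk) _
      _ = 2 * (ℙ (A k) * ℙ (C k)) := by rw [mul_comm (ℙ (C k))]
  have hsub : ∀ k, A k ∩ C k ⊆ {ω | l ≤ S N ω} := by
    intro k ω hω
    have h1 : l < S k ω := ((hAmem k ω).1 hω.1).2
    have h2 : S k ω ≤ S N ω := hω.2
    exact le_of_lt (lt_of_lt_of_le h1 h2)
  have hdisj2 : (↑(Finset.range (N+1)) : Set ℕ).PairwiseDisjoint (fun k => A k ∩ C k) :=
    fun a ha b hb hab => ((hdisj ha hb hab).mono inter_subset_left inter_subset_left)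
  have hfinal : {ω | l ≤ S N ω} ⊆ {ω | l ≤ ∑ i, D i ω} := by
    intro ω hω
    simp only [mem_setOf_eq] at hω ⊢
    rwa [← htot ω]
  calc ℙ {ω | ∃ k : ℕ, k ≤ N ∧ l < S k ω}
      = ℙ (⋃ k ∈ Finset.range (N+1), A k) := by rw [hcover]
    _ = ∑ k ∈ Finset.range (N+1), ℙ (A k) :=
        measure_biUnion_finset hdisj (fun k _ => hAmeasAmb k)
    _ ≤ ∑ k ∈ Finset.range (N+1), 2 * ℙ (A k ∩ C k) :=
        Finset.sum_le_sum (fun k hk => hhalf k (Nat.lt_succ_iff.1 (Finset.mem_range.1 hk)))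
    _ = 2 * ∑ k ∈ Finset.range (N+1), ℙ (A k ∩ C k) := by rw [Finset.mul_sum]
    _ = 2 * ℙ (⋃ k ∈ Finset.range (N+1), (A k ∩ C k)) := by
        rw [measure_biUnion_finset hdisj2 (fun k _ => (hAmeasAmb k).inter (hCmeasAmb k))]
    _ ≤ 2 * ℙ {ω | l ≤ S N ω} := by
        apply mul_le_mul_right
        apply measure_mono
        exact Set.iUnion₂_subset (fun k _ => hsub k)
    _ ≤ 2 * ℙ {ω | l ≤ ∑ i, D i ω} := mul_le_mul_right (measure_mono hfinal) _


set_option maxHeartbeats 1000000 in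
lemma bm_osc {Ω : Type*} [MeasureSpace Ω] [IsProbabilityMeasure (ℙ : Measure Ω)]
    {X : ℝ → Ω → ℝ} (hX : IsStandardBM X) {s : ℝ} (hs : 0 ≤ s) {l : ℝ} (hl : 0 < l) :
    ℙ {ω | ∃ t ∈ Icc s (s+1), l < |X t ω - X s ω|}
      ≤ ENNReal.ofReal (4 / l * Real.exp (-(l^2) / 2)) := by
  obtain ⟨hXm, hX0, hXc, hlaw, hinc⟩ := hX
  -- endpoint tail bounds
  have hmap : Measure.map (fun ω => X (s+1) ω - X s ω) ℙ = gaussianReal 0 1 := by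
    rw [hlaw s (s+1) hs (by linarith)]
    norm_num
  have hmeas_end : Measurable (fun ω => X (s+1) ω - X s ω) := (hXm (s+1)).sub (hXm s)
  have hend : ℙ {ω | l ≤ X (s+1) ω - X s ω} ≤ ENNReal.ofReal (1/l * Real.exp (-(l^2)/2)) := by
    have h1 : {ω | l ≤ X (s+1) ω - X s ω} = (fun ω => X (s+1) ω - X s ω) ⁻¹' (Ici l) := rfl
    rw [h1, ← Measure.map_apply hmeas_end measurableSet_Ici, hmap]
    have := gaussian_tail (v := 1) one_ne_zero hl
    simpa [one_div] using this
  have hend' : ℙ {ω | l ≤ -(X (s+1) ω - X s ω)} ≤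
      ENNReal.ofReal (1/l * Real.exp (-(l^2)/2)) := by
    have h1 : {ω | l ≤ -(X (s+1) ω - X s ω)} = (fun ω => X (s+1) ω - X s ω) ⁻¹' (Iic (-l)) := by
      ext ω; simp only [mem_setOf_eq, mem_preimage, mem_Iic]; constructor <;> intro h <;> linarith
    rw [h1, ← Measure.map_apply hmeas_end measurableSet_Iic, hmap]
    have := gaussian_Iic_tail (v := 1) one_ne_zero hl
    simpa [one_div] using this
  -- grid events
  set G : ℕ → Set Ω := fun m =>
    {ω | ∃ k : ℕ, k ≤ 2^m ∧ l < |X (s + k/2^m) ω - X s ω|} with hG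
  have hGbound : ∀ m : ℕ, ℙ (G m) ≤ ENNReal.ofReal (4/l * Real.exp (-(l^2)/2)) := by
    intro m
    have hN0 : (0:ℝ) < 2^m := by positivity
    set tm : Fin (2^m+1) → ℝ := fun j => s + (j:ℕ)/2^m with htm
    have htm_mono : Monotone tm := by
      intro a b hab
      have h1 : ((a:ℕ):ℝ) ≤ ((b:ℕ):ℝ) := by exact_mod_cast hab
      simp only [htm]
      gcongr
    have htm0 : tm 0 = s := by simp [htm]
    have htm0' : ∀ h, tm ⟨0, h⟩ = s := by intro h; simp [htm]
    have htmN : ∀ h, tm ⟨2^m, h⟩ = s + 1 := by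
      intro h
      simp only [htm]
      congr 1
      push_cast
      field_simp
    have htm_nonneg : ∀ j, 0 ≤ tm j := by
      intro j
      simp only [htm]
      positivity
    have htm_le : ∀ j, tm j ≤ s + 1 := by
      intro j
      have h := htm_mono (Fin.le_last j)
      rwa [show tm (Fin.last (2^m)) = s + 1 from htmN _] at h
    set D : Fin (2^m) → Ω → ℝ := fun i ω => X (tm i.succ) ω - X (tm i.castSucc) ω with hD
    have hDmeas : ∀ i, Measurable (D i) := fun i => (hXm _).sub (hXm _)
    have hDindep : iIndepFun D ℙ :=
      hinc (2^m) tm htm_mono (htm0 ▸ hs)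
    have hSsum : ∀ (k : ℕ) (hk : k ≤ 2^m) (ω : Ω),
        ∑ i ∈ Finset.univ.filter (fun i : Fin (2^m) => (i:ℕ) < k), D i ω
          = X (tm ⟨k, Nat.lt_succ_of_le hk⟩) ω - X s ω := by
      intro k hk ω
      rw [fin_telescope (fun j => X (tm j) ω) k hk, htm0']
    have htotD : ∀ ω, ∑ i, D i ω = X (s+1) ω - X s ω := by
      intro ω
      rw [show (Finset.univ : Finset (Fin (2^m)))
          = Finset.univ.filter (fun i : Fin (2^m) => (i:ℕ) < 2^m) from
          (Finset.filter_true_of_mem (fun i _ => i.isLt)).symm]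
      rw [hSsum (2^m) le_rfl ω, htmN]
    -- one-sided applications
    have hsymP : ∀ k : ℕ, k ≤ 2^m → (1/2 : ℝ≥0∞) ≤
        ℙ {ω | ∑ i ∈ Finset.univ.filter (fun i : Fin (2^m) => (i:ℕ) < k), D i ω ≤ ∑ i, D i ω} := by
      intro k hk
      have hset : {ω | ∑ i ∈ Finset.univ.filter (fun i : Fin (2^m) => (i:ℕ) < k), D i ω ≤ ∑ i, D i ω}
          = (fun ω => X (s+1) ω - X (tm ⟨k, Nat.lt_succ_of_le hk⟩) ω) ⁻¹' (Ici 0) := by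
        ext ω
        simp only [mem_setOf_eq, mem_preimage, mem_Ici, hSsum k hk ω, htotD ω]
        constructor <;> intro h <;> linarith
      rw [hset, ← Measure.map_apply (f := fun ω => X (s+1) ω - X (tm ⟨k, Nat.lt_succ_of_le hk⟩) ω) ((hXm _).sub (hXm _)) measurableSet_Ici,
        hlaw _ _ (htm_nonneg _) (htm_le _)]
      exact gaussian_Ici_zero_half _
    have hP : ℙ {ω | ∃ k : ℕ, k ≤ 2^m ∧ l <
          ∑ i ∈ Finset.univ.filter (fun i : Fin (2^m) => (i:ℕ) < k), D i ω}
        ≤ 2 * ℙ {ω | l ≤ ∑ i, D i ω} := grid_levy hDmeas hDindep hsymP l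
    -- negated family
    set D' : Fin (2^m) → Ω → ℝ := fun i ω => -(D i ω) with hD'
    have hD'meas : ∀ i, Measurable (D' i) := fun i => (hDmeas i).neg
    have hD'indep : iIndepFun D' ℙ := by
      have := hDindep.comp (fun _ => fun x : ℝ => -x) (fun _ => measurable_neg)
      exact this
    have hsum_neg : ∀ (F : Finset (Fin (2^m))) (ω : Ω), ∑ i ∈ F, D' i ω = -∑ i ∈ F, D i ω := by
      intro F ω
      simp [hD']
    have hsymN : ∀ k : ℕ, k ≤ 2^m → (1/2 : ℝ≥0∞) ≤
        ℙ {ω | ∑ i ∈ Finset.univ.filter (fun i : Fin (2^m) => (i:ℕ) < k), D' i ω ≤ ∑ i, D' i ω} := by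
      intro k hk
      have hset : {ω | ∑ i ∈ Finset.univ.filter (fun i : Fin (2^m) => (i:ℕ) < k), D' i ω ≤ ∑ i, D' i ω}
          = (fun ω => X (s+1) ω - X (tm ⟨k, Nat.lt_succ_of_le hk⟩) ω) ⁻¹' (Iic 0) := by
        ext ω
        simp only [mem_setOf_eq, mem_preimage, mem_Iic, hsum_neg, hSsum k hk ω, htotD ω]
        constructor <;> intro h <;> linarith
      rw [hset, ← Measure.map_apply (f := fun ω => X (s+1) ω - X (tm ⟨k, Nat.lt_succ_of_le hk⟩) ω) ((hXm _).sub (hXm _)) measurableSet_Iic,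
        hlaw _ _ (htm_nonneg _) (htm_le _)]
      exact gaussian_Iic_zero_half _
    have hP' : ℙ {ω | ∃ k : ℕ, k ≤ 2^m ∧ l <
          ∑ i ∈ Finset.univ.filter (fun i : Fin (2^m) => (i:ℕ) < k), D' i ω}
        ≤ 2 * ℙ {ω | l ≤ ∑ i, D' i ω} := grid_levy hD'meas hD'indep hsymN l
    -- G m is contained in the union
    have hGsub : G m ⊆
        {ω | ∃ k : ℕ, k ≤ 2^m ∧ l <
          ∑ i ∈ Finset.univ.filter (fun i : Fin (2^m) => (i:ℕ) < k), D i ω} ∪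
        {ω | ∃ k : ℕ, k ≤ 2^m ∧ l <
          ∑ i ∈ Finset.univ.filter (fun i : Fin (2^m) => (i:ℕ) < k), D' i ω} := by
      intro ω hω
      obtain ⟨k, hk, habs⟩ := hω
      have hxeq : X (s + k/2^m) ω = X (tm ⟨k, Nat.lt_succ_of_le hk⟩) ω := rfl
      rw [hxeq] at habs
      rcases lt_abs.1 habs with h | h
      · left
        exact ⟨k, hk, by rw [hSsum k hk ω]; exact h⟩
      · right
        refine ⟨k, hk, ?_⟩
        rw [hsum_neg, hSsum k hk ω]
        linarith
    calc ℙ (G m) ≤ ℙ ({ω | ∃ k : ℕ, k ≤ 2^m ∧ l <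
          ∑ i ∈ Finset.univ.filter (fun i : Fin (2^m) => (i:ℕ) < k), D i ω} ∪
        {ω | ∃ k : ℕ, k ≤ 2^m ∧ l <
          ∑ i ∈ Finset.univ.filter (fun i : Fin (2^m) => (i:ℕ) < k), D' i ω}) :=
          measure_mono hGsub
      _ ≤ _ + _ := measure_union_le _ _
      _ ≤ 2 * ℙ {ω | l ≤ ∑ i, D i ω} + 2 * ℙ {ω | l ≤ ∑ i, D' i ω} := add_le_add hP hP'
      _ ≤ 2 * ENNReal.ofReal (1/l * Real.exp (-(l^2)/2))
          + 2 * ENNReal.ofReal (1/l * Real.exp (-(l^2)/2)) := by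
          apply add_le_add
          · apply mul_le_mul_right
            refine le_trans (measure_mono ?_) hend
            intro ω hω
            simp only [mem_setOf_eq] at hω ⊢
            rwa [htotD ω] at hω
          · apply mul_le_mul_right
            refine le_trans (measure_mono ?_) hend'
            intro ω hω
            simp only [mem_setOf_eq] at hω ⊢
            rw [hsum_neg, htotD ω] at hω
            exact hω
      _ = ENNReal.ofReal (4/l * Real.exp (-(l^2)/2)) := by
          rw [← two_mul, ← mul_assoc]
          norm_num
          rw [← ENNReal.ofReal_ofNat, ← ENNReal.ofReal_mul (by norm_num)]
          congr 1
          ring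
  -- monotonicity of grid events
  have hGmono : Monotone G := by
    apply monotone_nat_of_le_succ
    intro m ω hω
    obtain ⟨k, hk, hprop⟩ := hω
    refine ⟨2*k, ?_, ?_⟩
    · rw [pow_succ]; omega
    · have heq : ((2*k : ℕ):ℝ)/2^(m+1) = (k:ℝ)/2^m := by
        push_cast
        rw [pow_succ]
        have : (0:ℝ) < 2^m := by positivity
        field_simp
      rwa [heq]
  -- covering by continuity
  have hcover : {ω | ∃ t ∈ Icc s (s+1), l < |X t ω - X s ω|} ⊆ ⋃ m, G m := by
    intro ω hω
    obtain ⟨t, ⟨hts, hts'⟩, hlt⟩ := hω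
    set ε : ℝ := |X t ω - X s ω| - l with hε
    have hε0 : 0 < ε := by simp only [hε]; linarith
    obtain ⟨δ, hδ0, hδ⟩ := Metric.continuous_iff.1 (hXc ω) t ε hε0
    obtain ⟨m, hm⟩ : ∃ m : ℕ, (1:ℝ)/2^m < δ := by
      obtain ⟨m, hm⟩ := pow_unbounded_of_one_lt (1/δ) one_lt_two
      refine ⟨m, ?_⟩
      rw [div_lt_iff₀ (by positivity)]
      rw [div_lt_iff₀ hδ0] at hm
      nlinarith [pow_pos (zero_lt_two (α := ℝ)) m]
    refine Set.mem_iUnion.2 ⟨m, ?_⟩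
    set k : ℕ := ⌈(t - s) * 2^m⌉₊ with hk
    have hts0 : 0 ≤ t - s := by linarith
    have hk1 : k ≤ 2^m := by
      rw [hk]
      refine Nat.ceil_le.2 ?_
      push_cast
      nlinarith [pow_pos (zero_lt_two (α := ℝ)) m]
    have hkge : (t - s) * 2^m ≤ k := Nat.le_ceil _
    have hklt : (k:ℝ) < (t - s) * 2^m + 1 := Nat.ceil_lt_add_one (by positivity)
    have hgrid_close : |s + k/2^m - t| < δ := by
      have h2m : (0:ℝ) < 2^m := by positivity
      rw [abs_lt]
      constructor
      · have : (t - s) ≤ (k:ℝ)/2^m := by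
          rw [le_div_iff₀ h2m]; linarith
        nlinarith
      · have : (k:ℝ)/2^m < (t - s) + 1/2^m := by
          rw [div_lt_iff₀ h2m]
          have : (1:ℝ)/2^m * 2^m = 1 := by field_simp
          nlinarith
        nlinarith
    have hclose := hδ (s + k/2^m) (by rwa [Real.dist_eq])
    rw [Real.dist_eq] at hclose
    refine ⟨k, hk1, ?_⟩
    have habs : |X t ω - X s ω| ≤ |X (s + k/2^m) ω - X s ω| + |X (s + k/2^m) ω - X t ω| := by
      have h1 : X t ω - X s ω = (X (s + k/2^m) ω - X s ω) - (X (s + k/2^m) ω - X t ω) := by ring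
      rw [h1]
      exact abs_sub _ _
    have := hclose
    simp only [hε] at hε0
    have : l < |X (s + k/2^m) ω - X s ω| := by
      have h2 : |X t ω - X s ω| = l + ε := by simp only [hε]; ring
      linarith
    exact this
  calc ℙ {ω | ∃ t ∈ Icc s (s+1), l < |X t ω - X s ω|}
      ≤ ℙ (⋃ m, G m) := measure_mono hcover
    _ = ⨆ m, ℙ (G m) := hGmono.measure_iUnion
    _ ≤ ENNReal.ofReal (4/l * Real.exp (-(l^2)/2)) := iSup_le hGbound


-- enorm3 lemmas
lemma enorm3_nonneg (v : Fin 3 → ℝ) : 0 ≤ enorm3 v := Real.sqrt_nonneg _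

lemma coord_le_enorm3 (v : Fin 3 → ℝ) (i : Fin 3) : |v i| ≤ enorm3 v := by
  rw [enorm3, ← Real.sqrt_sq_eq_abs]
  exact Real.sqrt_le_sqrt (Finset.single_le_sum (f := fun j => v j ^ 2)
    (fun j _ => sq_nonneg _) (Finset.mem_univ i))

lemma enorm3_le_of_coords {v : Fin 3 → ℝ} {c : ℝ} (h : ∀ i, |v i| ≤ c) :
    enorm3 v ≤ 2 * c := by
  have hc : 0 ≤ c := le_trans (abs_nonneg _) (h 0)
  have hsq : ∀ i, v i ^ 2 ≤ c ^ 2 := by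
    intro i
    rw [← sq_abs]
    exact pow_le_pow_left₀ (abs_nonneg _) (h i) 2
  have hsum : ∑ i, v i ^ 2 ≤ (2*c)^2 := by
    rw [Fin.sum_univ_three]
    nlinarith [hsq 0, hsq 1, hsq 2]
  calc enorm3 v = Real.sqrt (∑ i, v i ^ 2) := rfl
    _ ≤ Real.sqrt ((2*c)^2) := Real.sqrt_le_sqrt hsum
    _ = 2 * c := Real.sqrt_sq (by positivity)

lemma enorm3_eq_norm (v : Fin 3 → ℝ) :
    enorm3 v = ‖(WithLp.equiv 2 (Fin 3 → ℝ)).symm v‖ := by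
  rw [EuclideanSpace.norm_eq, enorm3]
  congr 1
  apply Finset.sum_congr rfl
  intro i _
  rw [WithLp.equiv_symm_apply, PiLp.toLp_apply, Real.norm_eq_abs, sq_abs]

lemma abs_enorm3_sub_enorm3_le (a b : Fin 3 → ℝ) :
    |enorm3 a - enorm3 b| ≤ enorm3 (fun i => a i - b i) := by
  rw [enorm3_eq_norm, enorm3_eq_norm, enorm3_eq_norm]
  have heq : (WithLp.equiv 2 (Fin 3 → ℝ)).symm (fun i => a i - b i)
      = (WithLp.equiv 2 (Fin 3 → ℝ)).symm a - (WithLp.equiv 2 (Fin 3 → ℝ)).symm b := by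
    rfl
  rw [heq]
  exact abs_norm_sub_norm_le _ _

-- fixed-time small ball for 3d BM
lemma bm3_smallball {Ω : Type*} [MeasureSpace Ω] [IsProbabilityMeasure (ℙ : Measure Ω)]
    {W : ℝ → Ω → Fin 3 → ℝ} (h : IsStandardBM3 W) {t : ℝ} (ht : 0 < t) {a : ℝ} (ha : 0 ≤ a) :
    ℙ {ω | enorm3 (W t ω) ≤ a} ≤ ENNReal.ofReal ((a / Real.sqrt t)^3) := by
  have hsub : {ω | enorm3 (W t ω) ≤ a} ⊆ ⋂ i : Fin 3, (fun ω => W t ω i) ⁻¹' (Icc (-a) a) := by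
    intro ω hω
    rw [Set.mem_iInter]
    intro i
    simp only [mem_preimage, mem_Icc, ← abs_le]
    exact le_trans (coord_le_enorm3 _ i) hω
  have hcoordindep : iIndepFun
      (fun i ω => W t ω i) ℙ := by
    have := h.2.comp (fun _ => fun φ : ℝ → ℝ => φ t) (fun _ => measurable_pi_apply t)
    exact this
  have hprod := hcoordindep.meas_iInter (s := fun i => (fun ω => W t ω i) ⁻¹' (Icc (-a) a))
    (fun i => ⟨Icc (-a) a, measurableSet_Icc, rfl⟩)
  have hcoord : ∀ i : Fin 3, ℙ ((fun ω => W t ω i) ⁻¹' (Icc (-a) a))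
      ≤ ENNReal.ofReal (a / Real.sqrt t) := by
    intro i
    obtain ⟨hXm, hX0, hXc, hlaw, hinc⟩ := h.1 i
    have hmap : Measure.map (fun ω => W t ω i) ℙ = gaussianReal 0 (Real.toNNReal t) := by
      have := hlaw 0 t le_rfl ht.le
      have heq : (fun ω => W t ω i - W 0 ω i) = (fun ω => W t ω i) := by
        funext ω
        have h00 : W 0 ω i = 0 := hX0 ω
        rw [h00, sub_zero]
      rw [heq] at this
      rw [this]
      norm_num
    rw [← Measure.map_apply (hXm t) measurableSet_Icc, hmap]
    have := gaussian_smallball (v := Real.toNNReal t) (by simp [Real.toNNReal_eq_zero]; linarith) ha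
    rwa [Real.coe_toNNReal _ ht.le] at this
  calc ℙ {ω | enorm3 (W t ω) ≤ a} ≤ ℙ (⋂ i : Fin 3, (fun ω => W t ω i) ⁻¹' (Icc (-a) a)) :=
        measure_mono hsub
    _ = ∏ i : Fin 3, ℙ ((fun ω => W t ω i) ⁻¹' (Icc (-a) a)) := hprod
    _ ≤ ∏ _i : Fin 3, ENNReal.ofReal (a / Real.sqrt t) := Finset.prod_le_prod' (fun i _ => hcoord i)
    _ = ENNReal.ofReal ((a / Real.sqrt t)^3) := by
        rw [Finset.prod_const]
        simp only [Finset.card_univ, Fintype.card_fin]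
        rw [← ENNReal.ofReal_pow (by positivity)]

set_option maxHeartbeats 1000000 in
lemma bm3_growth {Ω : Type*} [MeasureSpace Ω] [IsProbabilityMeasure (ℙ : Measure Ω)]
    {W : ℝ → Ω → Fin 3 → ℝ} (h : IsStandardBM3 W) :
    ∀ᵐ ω ∂(ℙ : Measure Ω), ∃ T : ℝ, 2 ≤ T ∧
      ∀ t : ℝ, T ≤ t → t ^ ((8:ℝ)⁻¹) ≤ enorm3 (W t ω) := by
  set c : ℕ → ℝ := fun k => ((k:ℝ)+2) ^ ((8:ℝ)⁻¹) with hc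
  have hc1 : ∀ k, 1 ≤ c k := by
    intro k
    rw [hc]
    calc (1:ℝ) = 1 ^ ((8:ℝ)⁻¹) := (Real.one_rpow _).symm
      _ ≤ ((k:ℝ)+2) ^ ((8:ℝ)⁻¹) := by
          apply Real.rpow_le_rpow (by norm_num) (by nlinarith [Nat.cast_nonneg (α := ℝ) k]) (by norm_num)
  have hc0 : ∀ k, 0 < c k := fun k => lt_of_lt_of_le one_pos (hc1 k)
  set Bad : ℕ → Set Ω := fun k =>
    {ω | enorm3 (W ((k:ℝ)+1) ω) ≤ 2 * c k} ∪
    ⋃ i : Fin 3, {ω | ∃ t ∈ Icc ((k:ℝ)+1) (((k:ℝ)+1)+1), c k / 2 < |W t ω i - W ((k:ℝ)+1) ω i|}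
    with hBad
  set u : ℕ → ℝ := fun k => (2 * c k / Real.sqrt ((k:ℝ)+1))^3
    + 3 * (4/(c k/2) * Real.exp (-((c k/2)^2)/2)) with hu
  have hu0 : ∀ k, 0 ≤ u k := by
    intro k
    have h1 : (0:ℝ) ≤ 2 * c k / Real.sqrt ((k:ℝ)+1) :=
      div_nonneg (by nlinarith [hc0 k]) (Real.sqrt_nonneg _)
    have h2 : (0:ℝ) ≤ 4/(c k/2) := div_nonneg (by norm_num) (by nlinarith [hc0 k])
    have h3 := (Real.exp_pos (-((c k/2)^2)/2)).le
    have h4 : (0:ℝ) ≤ 4/(c k/2) * Real.exp (-((c k/2)^2)/2) := mul_nonneg h2 h3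
    rw [hu]
    have := pow_nonneg h1 3
    nlinarith
  have hbound : ∀ k, ℙ (Bad k) ≤ ENNReal.ofReal (u k) := by
    intro k
    have h1 : ℙ {ω | enorm3 (W ((k:ℝ)+1) ω) ≤ 2 * c k}
        ≤ ENNReal.ofReal ((2 * c k / Real.sqrt ((k:ℝ)+1))^3) :=
      bm3_smallball h (by positivity) (by nlinarith [hc0 k])
    have h2 : ∀ i : Fin 3,
        ℙ {ω | ∃ t ∈ Icc ((k:ℝ)+1) (((k:ℝ)+1)+1), c k / 2 < |W t ω i - W ((k:ℝ)+1) ω i|}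
        ≤ ENNReal.ofReal (4/(c k/2) * Real.exp (-((c k/2)^2)/2)) := by
      intro i
      exact bm_osc (h.1 i) (by positivity) (half_pos (hc0 k))
    have h2nonneg : (0:ℝ) ≤ 4/(c k/2) * Real.exp (-((c k/2)^2)/2) :=
      mul_nonneg (div_nonneg (by norm_num) (by nlinarith [hc0 k])) (Real.exp_pos _).le
    calc ℙ (Bad k) ≤ ℙ {ω | enorm3 (W ((k:ℝ)+1) ω) ≤ 2 * c k}
          + ℙ (⋃ i : Fin 3, {ω | ∃ t ∈ Icc ((k:ℝ)+1) (((k:ℝ)+1)+1),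
              c k / 2 < |W t ω i - W ((k:ℝ)+1) ω i|}) := measure_union_le _ _
      _ ≤ ENNReal.ofReal ((2 * c k / Real.sqrt ((k:ℝ)+1))^3)
          + ∑ _i : Fin 3, ENNReal.ofReal (4/(c k/2) * Real.exp (-((c k/2)^2)/2)) := by
          apply add_le_add h1
          refine le_trans (measure_iUnion_fintype_le _ _) ?_
          exact Finset.sum_le_sum (fun i _ => h2 i)
      _ = ENNReal.ofReal ((2 * c k / Real.sqrt ((k:ℝ)+1))^3)
          + ENNReal.ofReal (3 * (4/(c k/2) * Real.exp (-((c k/2)^2)/2))) := by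
          rw [Finset.sum_const]
          simp only [Finset.card_univ, Fintype.card_fin]
          rw [nsmul_eq_mul, ENNReal.ofReal_mul (show (0:ℝ) ≤ 3 by norm_num)]
          norm_num
      _ ≤ ENNReal.ofReal (u k) := by
          rw [← ENNReal.ofReal_add (by positivity) (by nlinarith)]
  -- summability
  have hsum_base : Summable (fun k : ℕ => ((k:ℝ)+1) ^ (-(9:ℝ)/8)) := by
    have h1 : Summable (fun n : ℕ => ((n:ℝ) ^ ((9:ℝ)/8))⁻¹) :=
      Real.summable_nat_rpow_inv.2 (by norm_num)
    have h2 := (summable_nat_add_iff 1).2 h1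
    refine h2.congr (fun n => ?_)
    push_cast
    rw [← Real.rpow_neg (by positivity)]
    norm_num
  have hub : ∀ k, u k ≤ (64 + 24 * 128^16) * ((k:ℝ)+1) ^ (-(9:ℝ)/8) := by
    intro k
    have hK1 : (1:ℝ) ≤ (k:ℝ)+1 := by
      have : (0:ℝ) ≤ (k:ℝ) := Nat.cast_nonneg k
      linarith
    have hK1p : (0:ℝ) < (k:ℝ)+1 := by linarith
    have hcle : c k ≤ 2 * ((k:ℝ)+1) ^ ((8:ℝ)⁻¹) := by
      rw [hc]
      have h1 : ((k:ℝ)+2) ≤ 2 * ((k:ℝ)+1) := by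
        have : (0:ℝ) ≤ (k:ℝ) := Nat.cast_nonneg k
        linarith
      calc ((k:ℝ)+2) ^ ((8:ℝ)⁻¹) ≤ (2*((k:ℝ)+1)) ^ ((8:ℝ)⁻¹) :=
            Real.rpow_le_rpow (by positivity) h1 (by norm_num)
        _ = 2 ^ ((8:ℝ)⁻¹) * ((k:ℝ)+1) ^ ((8:ℝ)⁻¹) :=
            Real.mul_rpow (by norm_num) (by positivity)
        _ ≤ 2 * ((k:ℝ)+1) ^ ((8:ℝ)⁻¹) := by
            apply mul_le_mul_of_nonneg_right _ (by positivity)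
            calc (2:ℝ) ^ ((8:ℝ)⁻¹) ≤ 2 ^ (1:ℝ) :=
                  Real.rpow_le_rpow_of_exponent_le (by norm_num) (by norm_num)
              _ = 2 := Real.rpow_one 2
    have hpiece1 : (2 * c k / Real.sqrt ((k:ℝ)+1))^3 ≤ 64 * ((k:ℝ)+1) ^ (-(9:ℝ)/8) := by
      have hden : 0 < Real.sqrt ((k:ℝ)+1) := Real.sqrt_pos.2 hK1p
      have hq : 2 * c k / Real.sqrt ((k:ℝ)+1) ≤ 4 * ((k:ℝ)+1) ^ ((8:ℝ)⁻¹ - (2:ℝ)⁻¹) := by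
        rw [div_le_iff₀ hden, Real.sqrt_eq_rpow]
        rw [mul_assoc, ← Real.rpow_add hK1p]
        have : (8:ℝ)⁻¹ - (2:ℝ)⁻¹ + 1/2 = (8:ℝ)⁻¹ := by norm_num
        rw [this]
        linarith [hcle]
      have hqn : (0:ℝ) ≤ 2 * c k / Real.sqrt ((k:ℝ)+1) :=
        div_nonneg (by nlinarith [hc0 k]) hden.le
      calc (2 * c k / Real.sqrt ((k:ℝ)+1))^3 ≤ (4 * ((k:ℝ)+1) ^ ((8:ℝ)⁻¹ - (2:ℝ)⁻¹))^3 :=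
            pow_le_pow_left₀ hqn hq 3
        _ = 64 * (((k:ℝ)+1) ^ ((8:ℝ)⁻¹ - (2:ℝ)⁻¹))^(3:ℕ) := by ring
        _ = 64 * ((k:ℝ)+1) ^ (-(9:ℝ)/8) := by
            rw [← Real.rpow_natCast (((k:ℝ)+1) ^ ((8:ℝ)⁻¹ - (2:ℝ)⁻¹)) 3,
              ← Real.rpow_mul hK1p.le]
            norm_num
    have hexp2 : Real.exp (-((c k/2)^2)/2) ≤ 128^16 * ((k:ℝ)+1) ^ (-(9:ℝ)/8) := by
      have hk2p : (0:ℝ) < (k:ℝ)+2 := by linarith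
      have hck2 : ((c k/2)^2)/2 = ((k:ℝ)+2) ^ ((4:ℝ)⁻¹) / 8 := by
        rw [hc, div_pow, ← Real.rpow_natCast ((((k:ℝ)+2)) ^ ((8:ℝ)⁻¹)) 2,
          ← Real.rpow_mul hk2p.le]
        norm_num
        ring
      have hy : (0:ℝ) < ((k:ℝ)+2) ^ ((4:ℝ)⁻¹) / 8 := by positivity
      have h16 := exp_neg_le_pow 16 (by norm_num) hy
      push_cast at h16
      have heq1 : Real.exp (-((c k/2)^2)/2) = Real.exp (-(((k:ℝ)+2) ^ ((4:ℝ)⁻¹) / 8)) := by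
        rw [neg_div, hck2]
      rw [heq1]
      refine h16.trans ?_
      have heq2 : ((16:ℝ) / (((k:ℝ)+2) ^ ((4:ℝ)⁻¹) / 8))^16
          = 128^16 / (((k:ℝ)+2) ^ ((4:ℝ)⁻¹))^(16:ℕ) := by
        rw [div_div_eq_mul_div, div_pow]
        norm_num
      rw [heq2]
      have heq3 : (((k:ℝ)+2) ^ ((4:ℝ)⁻¹))^(16:ℕ) = ((k:ℝ)+2) ^ (4:ℕ) := by
        rw [← Real.rpow_natCast (((k:ℝ)+2) ^ ((4:ℝ)⁻¹)) 16, ← Real.rpow_mul hk2p.le,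
          ← Real.rpow_natCast ((k:ℝ)+2) 4]
        norm_num
      rw [heq3]
      have hcomp : ((k:ℝ)+1) ^ ((9:ℝ)/8) ≤ ((k:ℝ)+2) ^ (4:ℕ) := by
        calc ((k:ℝ)+1) ^ ((9:ℝ)/8) ≤ ((k:ℝ)+1) ^ (2:ℝ) :=
              Real.rpow_le_rpow_of_exponent_le hK1 (by norm_num)
          _ = ((k:ℝ)+1) ^ (2:ℕ) := by
              rw [show (2:ℝ) = ((2:ℕ):ℝ) by norm_num, Real.rpow_natCast]
          _ ≤ ((k:ℝ)+2) ^ (4:ℕ) := by nlinarith [Nat.cast_nonneg (α := ℝ) k]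
      have h9p : (0:ℝ) < ((k:ℝ)+1) ^ ((9:ℝ)/8) := Real.rpow_pos_of_pos hK1p _
      calc (128:ℝ)^16 / (((k:ℝ)+2)) ^ (4:ℕ)
          ≤ 128^16 / ((k:ℝ)+1) ^ ((9:ℝ)/8) :=
            div_le_div_of_nonneg_left (by norm_num) h9p hcomp
        _ = 128^16 * ((k:ℝ)+1) ^ (-(9:ℝ)/8) := by
            rw [neg_div, Real.rpow_neg hK1p.le, div_eq_mul_inv]
    have hpiece2 : 3 * (4/(c k/2) * Real.exp (-((c k/2)^2)/2))
        ≤ 24 * 128^16 * ((k:ℝ)+1) ^ (-(9:ℝ)/8) := by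
      have h8 : 4/(c k/2) ≤ 8 := by
        rw [div_div_eq_mul_div]
        norm_num
        calc (8:ℝ)/(c k) ≤ 8/1 := div_le_div_of_nonneg_left (by norm_num) one_pos (hc1 k)
          _ = 8 := by norm_num
      have hexp_nonneg := (Real.exp_pos (-((c k/2)^2)/2)).le
      have h4n : (0:ℝ) ≤ 4/(c k/2) := div_nonneg (by norm_num) (by nlinarith [hc0 k])
      calc 3 * (4/(c k/2) * Real.exp (-((c k/2)^2)/2))
          ≤ 3 * (8 * (128^16 * ((k:ℝ)+1) ^ (-(9:ℝ)/8))) := by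
            apply mul_le_mul_of_nonneg_left _ (by norm_num)
            exact mul_le_mul h8 hexp2 hexp_nonneg (by norm_num)
        _ = 24 * 128^16 * ((k:ℝ)+1) ^ (-(9:ℝ)/8) := by ring
    rw [hu]
    have hexpand : (64 + 24 * 128^16) * ((k:ℝ)+1) ^ (-(9:ℝ)/8)
        = 64 * ((k:ℝ)+1) ^ (-(9:ℝ)/8) + 24 * 128^16 * ((k:ℝ)+1) ^ (-(9:ℝ)/8) := by ring
    rw [hexpand]
    exact add_le_add hpiece1 hpiece2
  have husum : Summable u :=
    Summable.of_nonneg_of_le hu0 hub (hsum_base.mul_left _)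
  -- Borel-Cantelli
  have htsum : (∑' k, ℙ (Bad k)) ≠ ⊤ := by
    have h1 : (∑' k, ℙ (Bad k)) ≤ ∑' k, ENNReal.ofReal (u k) := ENNReal.tsum_le_tsum hbound
    have h2 : (∑' k, ENNReal.ofReal (u k)) = ENNReal.ofReal (∑' k, u k) :=
      (ENNReal.ofReal_tsum_of_nonneg hu0 husum).symm
    exact ne_top_of_le_ne_top (by rw [h2]; exact ENNReal.ofReal_ne_top) h1
  filter_upwards [ae_eventually_notMem htsum] with ω hω
  obtain ⟨K, hK⟩ := (eventually_atTop).1 hω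
  refine ⟨(K:ℝ)+2, by nlinarith [Nat.cast_nonneg (α := ℝ) K], ?_⟩
  intro t ht
  have hKc : (0:ℝ) ≤ (K:ℝ) := Nat.cast_nonneg K
  have ht2 : (2:ℝ) ≤ t := by linarith
  have hfloor1 : K + 2 ≤ ⌊t⌋₊ := Nat.le_floor (by push_cast; linarith)
  set k : ℕ := ⌊t⌋₊ - 1 with hk
  have hk1 : k + 1 = ⌊t⌋₊ := by omega
  have hkK : K ≤ k := by omega
  have hfl : ((k:ℝ)+1) ≤ t := by
    have h0 : ((⌊t⌋₊ : ℕ):ℝ) ≤ t := Nat.floor_le (by linarith)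
    rw [← hk1] at h0
    push_cast at h0
    linarith
  have hfu : t ≤ ((k:ℝ)+1)+1 := by
    have h0 := (Nat.lt_floor_add_one t).le
    rw [← hk1] at h0
    push_cast at h0
    linarith
  have hnotbad := hK k hkK
  rw [hBad] at hnotbad
  simp only [Set.mem_union, Set.mem_iUnion, mem_setOf_eq, not_or, not_exists] at hnotbad
  push_neg at hnotbad
  obtain ⟨hstart, hosc⟩ := hnotbad
  have hdiff : enorm3 (fun i => W t ω i - W ((k:ℝ)+1) ω i) ≤ 2 * (c k / 2) :=
    enorm3_le_of_coords (fun i => (hosc i t ⟨hfl, hfu⟩))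
  have h10 := abs_enorm3_sub_enorm3_le (W t ω) (W ((k:ℝ)+1) ω)
  have h11 := abs_le.1 h10
  have h9 : c k ≤ enorm3 (W t ω) := by
    have h12 : 2 * (c k/2) = c k := by ring
    have h13 : enorm3 (fun i => W t ω i - W ((k:ℝ)+1) ω i) ≤ c k := by linarith
    linarith [h11.1, hstart]
  calc t ^ ((8:ℝ)⁻¹) ≤ ((k:ℝ)+2) ^ ((8:ℝ)⁻¹) :=
        Real.rpow_le_rpow (by linarith) (by linarith) (by norm_num)
    _ = c k := rfl
    _ ≤ enorm3 (W t ω) := h9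


/-- Almost surely, the quenched correlation `x ↦ ∫ e^{-𝓑(y)} e^{-𝓑(y+x)} dy` of the two-sided
Bessel-3 process decays faster than any polynomial as `|x| → ∞`, and in particular has finite
moments of all orders. -/
theorem quenched_correlation_superpolynomial_decay {Ω : Type*} [MeasureSpace Ω]
    [IsProbabilityMeasure (ℙ : Measure Ω)]
    (W₁ W₂ : ℝ → Ω → Fin 3 → ℝ) (h : TwoSidedBM3Pair W₁ W₂) :
    ∀ᵐ ω ∂ℙ,
      (∀ p : ℕ, Tendsto
        (fun x : ℝ => |x| ^ p *
          ∫ y : ℝ, Real.exp (-(twoSidedBessel3 W₁ W₂ y ω)) *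
            Real.exp (-(twoSidedBessel3 W₁ W₂ (y + x) ω)))
        (Filter.cocompact ℝ) (nhds 0)) ∧
      (∀ p : ℕ, (∫⁻ x : ℝ, ENNReal.ofReal (|x| ^ p *
          ∫ y : ℝ, Real.exp (-(twoSidedBessel3 W₁ W₂ y ω)) *
            Real.exp (-(twoSidedBessel3 W₁ W₂ (y + x) ω)))) < ⊤) := by
  obtain ⟨h1, h2, _⟩ := h
  filter_upwards [bm3_growth h1, bm3_growth h2] with ω hω₁ hω₂
  obtain ⟨T₁, hT₁, hg₁⟩ := hω₁
  obtain ⟨T₂, hT₂, hg₂⟩ := hω₂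
  set b : ℝ → ℝ := fun y => twoSidedBessel3 W₁ W₂ y ω with hbdef
  have hzero1 : enorm3 (W₁ 0 ω) = 0 := by
    have hz : ∀ i : Fin 3, W₁ 0 ω i = 0 := fun i => (h1.1 i).2.1 ω
    simp [enorm3, hz]
  have hzero2 : enorm3 (W₂ 0 ω) = 0 := by
    have hz : ∀ i : Fin 3, W₂ 0 ω i = 0 := fun i => (h2.1 i).2.1 ω
    simp [enorm3, hz]
  have henorm3_cont : Continuous enorm3 := by
    apply Real.continuous_sqrt.comp
    exact continuous_finset_sum _ (fun i _ => (continuous_apply i).pow 2)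
  have hpath1 : Continuous fun x : ℝ => W₁ x ω := by
    apply continuous_pi
    intro i
    exact (h1.1 i).2.2.1 ω
  have hpath2 : Continuous fun x : ℝ => W₂ x ω := by
    apply continuous_pi
    intro i
    exact (h2.1 i).2.2.1 ω
  have hb_cont : Continuous b := by
    have : b = fun x : ℝ => if (fun _ : ℝ => (0:ℝ)) x ≤ (fun x : ℝ => x) x
        then enorm3 (W₁ x ω) else enorm3 (W₂ (-x) ω) := rfl
    rw [this]
    apply Continuous.if_le
    · exact henorm3_cont.comp hpath1
    · exact (henorm3_cont.comp hpath2).comp continuous_neg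
    · exact continuous_const
    · exact continuous_id
    · intro x hx
      rw [← hx, neg_zero, hzero1, hzero2]
  have hb0 : ∀ y, 0 ≤ b y := by
    intro y
    rw [hbdef]
    simp only [twoSidedBessel3]
    split_ifs
    · exact Real.sqrt_nonneg _
    · exact Real.sqrt_nonneg _
  set T : ℝ := max (max T₁ T₂) 2 with hT
  have hT2 : 2 ≤ T := le_max_right _ _
  have hgrow : ∀ y : ℝ, T ≤ |y| → |y| ^ (8:ℝ)⁻¹ ≤ b y := by
    intro y hy
    rcases le_or_gt 0 y with hy0 | hy0
    · rw [abs_of_nonneg hy0] at hy ⊢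
      have hby : b y = enorm3 (W₁ y ω) := by
        rw [hbdef]; simp only [twoSidedBessel3, if_pos hy0]
      rw [hby]
      exact hg₁ y (le_trans (le_trans (le_max_left _ _) (le_max_left _ _)) hy)
    · rw [abs_of_neg hy0] at hy ⊢
      have hby : b y = enorm3 (W₂ (-y) ω) := by
        rw [hbdef]; simp only [twoSidedBessel3, if_neg (not_le.2 hy0)]
      rw [hby]
      exact hg₂ (-y) (le_trans (le_trans (le_max_right _ _) (le_max_left _ _)) hy)
  exact analysis_main hb_cont hb0 hT2 hgrow


end
end
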